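/- arXiv:2407.16195 — 3 statements merged into one kernel-verified Lean document; each statement's English description precedes it below -/
import Mathlib

section
/- Let R_2 = ((max_{x∈[0,L]} ρ(x) + J)/(min_{x∈[0,L]} EI(x)))·max{1, L^3}. Then for every integer k ≥ 1 and every x ∈ [0,L], the generating function h_k satisfies |h_k(x)| ≤ R_2^k x^{4k−2}/(4k−2)! and |h_k'(x)| ≤ R_2^k x^{4k−3}/(4k−3)!. -/
open Set Filter intervalIntegral
open MeasureTheory

/-- The generating functions `g_k` of the beam model, defined by iterated integrals. -/
noncomputable def genG (ρ EI : ℝ → ℝ) (m : ℝ) : ℕ → ℝ → ℝ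
  | 0 => fun _ => 1
  | 1 => fun x =>
      -(∫ s₁ in (0:ℝ)..x, ∫ s₂ in (0:ℝ)..s₁, ∫ s₃ in (0:ℝ)..s₂, ∫ s₄ in (0:ℝ)..s₃,
          ρ s₄ / EI s₂)
      - m * ∫ s₁ in (0:ℝ)..x, ∫ s₂ in (0:ℝ)..s₁, ∫ _s₃ in (0:ℝ)..s₂, 1 / EI s₂
  | (k + 2) => fun x =>
      -(∫ s₁ in (0:ℝ)..x, ∫ s₂ in (0:ℝ)..s₁, ∫ s₃ in (0:ℝ)..s₂, ∫ s₄ in (0:ℝ)..s₃,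
          ρ s₄ * genG ρ EI m (k + 1) s₄ / EI s₂)

/-- The generating functions `h_k` of the beam model, defined by iterated integrals. -/
noncomputable def genH (ρ EI : ℝ → ℝ) (J : ℝ) : ℕ → ℝ → ℝ
  | 0 => fun x => x
  | 1 => fun x =>
      -(∫ s₁ in (0:ℝ)..x, ∫ s₂ in (0:ℝ)..s₁, ∫ s₃ in (0:ℝ)..s₂, ∫ s₄ in (0:ℝ)..s₃,
          s₄ * ρ s₄ / EI s₂)
      + J * ∫ s₁ in (0:ℝ)..x, ∫ s₂ in (0:ℝ)..s₁, 1 / EI s₂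
  | (k + 2) => fun x =>
      -(∫ s₁ in (0:ℝ)..x, ∫ s₂ in (0:ℝ)..s₁, ∫ s₃ in (0:ℝ)..s₂, ∫ s₄ in (0:ℝ)..s₃,
          ρ s₄ * genH ρ EI J (k + 1) s₄ / EI s₂)

/-- Membership in the Gevrey class `G_s[0,T]`: a smooth function whose derivatives satisfy
`sup_{t ∈ [0,T]} |y⁽ᵐ⁾(t)| ≤ D^(m+1) (m!)^s` for some `D > 0`. -/
def MemGevrey (s T : ℝ) (y : ℝ → ℝ) : Prop :=
  ContDiff ℝ (⊤ : ℕ∞) y ∧ ∃ D > 0, ∀ (n : ℕ), ∀ t ∈ Set.Icc (0:ℝ) T,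
    |iteratedDeriv n y t| ≤ D ^ (n + 1) * (n.factorial : ℝ) ^ s


private lemma my_intble {f : ℝ → ℝ} {L x : ℝ} (hf : ContinuousOn f (Icc 0 L))
    (hx : x ∈ Icc (0:ℝ) L) : IntervalIntegrable f volume 0 x := by
  apply ContinuousOn.intervalIntegrable
  apply hf.mono
  rw [uIcc_of_le hx.1]
  exact Icc_subset_Icc le_rfl hx.2

private lemma integ_bound {f : ℝ → ℝ} {C : ℝ} {n : ℕ} {x : ℝ} (hx : 0 ≤ x)
    (hf : IntervalIntegrable f volume 0 x)
    (hb : ∀ t ∈ Icc (0:ℝ) x, |f t| ≤ C * t ^ n / (n.factorial : ℝ)) :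
    |∫ t in (0:ℝ)..x, f t| ≤ C * x ^ (n + 1) / ((n + 1).factorial : ℝ) := by
  have h1 : |∫ t in (0:ℝ)..x, f t| ≤ ∫ t in (0:ℝ)..x, |f t| :=
    intervalIntegral.abs_integral_le_integral_abs hx
  have hg : IntervalIntegrable (fun t => C * t ^ n / (n.factorial : ℝ)) volume 0 x := by
    apply Continuous.intervalIntegrable
    fun_prop
  have h2 : (∫ t in (0:ℝ)..x, |f t|) ≤ ∫ t in (0:ℝ)..x, C * t ^ n / (n.factorial : ℝ) :=
    intervalIntegral.integral_mono_on hx hf.abs hg hb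
  have h3 : (∫ t in (0:ℝ)..x, C * t ^ n / (n.factorial : ℝ))
      = C * x ^ (n+1) / ((n+1).factorial : ℝ) := by
    have he : (fun t : ℝ => C * t ^ n / (n.factorial : ℝ))
        = fun t : ℝ => (C / (n.factorial : ℝ)) * t ^ n := by
      funext t; ring
    rw [he, intervalIntegral.integral_const_mul, integral_pow]
    have hfac : ((n+1).factorial : ℝ) = (n+1) * (n.factorial : ℝ) := by
      rw [Nat.factorial_succ]; push_cast; ring
    have hf0 : (n.factorial : ℝ) ≠ 0 := Nat.cast_ne_zero.mpr (Nat.factorial_ne_zero n)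
    have hn0 : ((n:ℝ) + 1) ≠ 0 := by positivity
    rw [hfac, zero_pow (Nat.succ_ne_zero n), sub_zero, div_mul_div_comm,
      mul_comm (n.factorial : ℝ) ((n:ℝ)+1)]
  linarith [h1, h2, h3.le]

private lemma cont_prim {f : ℝ → ℝ} {L : ℝ} (hL : 0 ≤ L) (hf : ContinuousOn f (Icc 0 L)) :
    ContinuousOn (fun y => ∫ t in (0:ℝ)..y, f t) (Icc 0 L) := by
  have h := intervalIntegral.continuousOn_primitive_interval
    (a := (0:ℝ)) (b := L) (μ := volume) (f := f) ?_
  · rwa [uIcc_of_le hL] at h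
  · rw [uIcc_of_le hL]
    exact hf.integrableOn_Icc

private lemma ftc_within {f : ℝ → ℝ} {L x : ℝ}
    (hf : ContinuousOn f (Icc 0 L)) (hx : x ∈ Icc (0:ℝ) L) :
    HasDerivWithinAt (fun y => ∫ t in (0:ℝ)..y, f t) (f x) (Icc 0 L) x := by
  haveI : Fact (x ∈ Icc (0:ℝ) L) := ⟨hx⟩
  exact intervalIntegral.integral_hasDerivWithinAt_right (my_intble hf hx)
    (hf.stronglyMeasurableAtFilter_nhdsWithin measurableSet_Icc x) (hf x hx)

private lemma prim_bound {f : ℝ → ℝ} {L C : ℝ} {n : ℕ} (hL : 0 ≤ L)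
    (hf : ContinuousOn f (Icc 0 L))
    (hb : ∀ t ∈ Icc (0:ℝ) L, |f t| ≤ C * t ^ n / (n.factorial : ℝ)) :
    ∀ x ∈ Icc (0:ℝ) L, |∫ t in (0:ℝ)..x, f t| ≤ C * x ^ (n + 1) / ((n + 1).factorial : ℝ) := by
  intro x hx
  exact integ_bound hx.1 (my_intble hf hx)
    (fun t ht => hb t ⟨ht.1, ht.2.trans hx.2⟩)

private lemma quad_step (L : ℝ) (hL : 0 < L) (EI : ℝ → ℝ)
    (hEIc : ContinuousOn EI (Icc 0 L)) (e : ℝ) (he : 0 < e)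
    (hE : ∀ x ∈ Icc (0:ℝ) L, e ≤ EI x)
    (g : ℝ → ℝ) (hg : ContinuousOn g (Icc 0 L))
    (C : ℝ) (n : ℕ)
    (hb : ∀ t ∈ Icc (0:ℝ) L, |g t| ≤ C * t ^ n / (n.factorial : ℝ)) :
    ∃ G : ℝ → ℝ,
      (∀ x : ℝ, (∫ s₁ in (0:ℝ)..x, ∫ s₂ in (0:ℝ)..s₁, ∫ s₃ in (0:ℝ)..s₂,
          ∫ s₄ in (0:ℝ)..s₃, g s₄ / EI s₂) = ∫ s₁ in (0:ℝ)..x, G s₁) ∧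
      ContinuousOn G (Icc 0 L) ∧
      (∀ x ∈ Icc (0:ℝ) L, |G x| ≤ C / e * x ^ (n+3) / ((n+3).factorial : ℝ)) ∧
      ContinuousOn (fun x => ∫ s₁ in (0:ℝ)..x, G s₁) (Icc 0 L) ∧
      (∀ x ∈ Icc (0:ℝ) L, |∫ s₁ in (0:ℝ)..x, G s₁| ≤ C / e * x ^ (n+4) / ((n+4).factorial : ℝ)) ∧
      (∀ x ∈ Icc (0:ℝ) L, HasDerivWithinAt (fun y => ∫ s₁ in (0:ℝ)..y, G s₁) (G x) (Icc 0 L) x) := by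
  set q : ℝ → ℝ := fun s₃ => ∫ s₄ in (0:ℝ)..s₃, g s₄ with hq
  have hqc : ContinuousOn q (Icc 0 L) := cont_prim hL.le hg
  have hqb : ∀ s ∈ Icc (0:ℝ) L, |q s| ≤ C * s ^ (n+1) / ((n+1).factorial : ℝ) :=
    prim_bound hL.le hg hb
  set Q : ℝ → ℝ := fun s₂ => ∫ s₃ in (0:ℝ)..s₂, q s₃ with hQ
  have hQc : ContinuousOn Q (Icc 0 L) := cont_prim hL.le hqc
  have hQb : ∀ s ∈ Icc (0:ℝ) L, |Q s| ≤ C * s ^ (n+2) / ((n+2).factorial : ℝ) :=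
    prim_bound hL.le hqc hqb
  set F : ℝ → ℝ := fun s₂ => Q s₂ / EI s₂ with hF
  have hFc : ContinuousOn F (Icc 0 L) :=
    hQc.div hEIc (fun x hx => ne_of_gt (lt_of_lt_of_le he (hE x hx)))
  have hFb : ∀ s ∈ Icc (0:ℝ) L, |F s| ≤ (C/e) * s ^ (n+2) / ((n+2).factorial : ℝ) := by
    intro s hs
    have h1 : |F s| = |Q s| / |EI s| := abs_div _ _
    have h2 : e ≤ |EI s| := le_trans (hE s hs) (le_abs_self _)
    have h3 := hQb s hs
    have h0 : (0:ℝ) ≤ C * s ^ (n+2) / ((n+2).factorial : ℝ) := le_trans (abs_nonneg _) h3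
    rw [h1]
    calc |Q s| / |EI s| ≤ (C * s ^ (n+2) / ((n+2).factorial : ℝ)) / e :=
          div_le_div₀ h0 h3 he h2
      _ = (C/e) * s ^ (n+2) / ((n+2).factorial : ℝ) := by ring
  set G : ℝ → ℝ := fun s₁ => ∫ s₂ in (0:ℝ)..s₁, F s₂ with hG
  have hGc : ContinuousOn G (Icc 0 L) := cont_prim hL.le hFc
  have hGb : ∀ s ∈ Icc (0:ℝ) L, |G s| ≤ (C/e) * s ^ (n+3) / ((n+3).factorial : ℝ) :=
    prim_bound hL.le hFc hFb
  refine ⟨G, ?_, hGc, hGb, cont_prim hL.le hGc, prim_bound hL.le hGc hGb,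
    fun x hx => ftc_within hGc hx⟩
  intro x
  have h4 : ∀ s₂ : ℝ, (∫ s₃ in (0:ℝ)..s₂, ∫ s₄ in (0:ℝ)..s₃, g s₄ / EI s₂) = F s₂ := by
    intro s₂
    have h5 : ∀ s₃ : ℝ, (∫ s₄ in (0:ℝ)..s₃, g s₄ / EI s₂) = q s₃ / EI s₂ := fun s₃ =>
      intervalIntegral.integral_div _ _
    simp only [h5, hF]
    exact intervalIntegral.integral_div _ _
  simp only [h4]
  rfl

private lemma genH_aux (L J : ℝ) (hL : 0 < L) (hJ : 0 ≤ J) (ρ EI : ℝ → ℝ)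
    (hρc : ContinuousOn ρ (Icc 0 L)) (hEIc : ContinuousOn EI (Icc 0 L))
    (M e : ℝ) (hMnn : 0 ≤ M) (hM : ∀ x ∈ Icc (0:ℝ) L, |ρ x| ≤ M)
    (he : 0 < e) (hE : ∀ x ∈ Icc (0:ℝ) L, e ≤ EI x)
    (R : ℝ) (hR : 0 < R) (hRb : (M + J) / e * max 1 (L ^ 3) ≤ R) :
    ∀ k : ℕ,
      ContinuousOn (genH ρ EI J (k+1)) (Icc 0 L) ∧
      (∀ x ∈ Icc (0:ℝ) L, |genH ρ EI J (k+1) x| ≤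
        R ^ (k+1) * x ^ (4*k+2) / ((4*k+2).factorial : ℝ)) ∧
      (∀ x ∈ Icc (0:ℝ) L, ∃ d : ℝ, HasDerivWithinAt (genH ρ EI J (k+1)) d (Icc 0 L) x ∧
        |d| ≤ R ^ (k+1) * x ^ (4*k+1) / ((4*k+1).factorial : ℝ)) := by
  have hmx1 : (1:ℝ) ≤ max 1 (L^3) := le_max_left _ _
  have hmxL : L^3 ≤ max 1 (L^3) := le_max_right _ _
  have hmx0 : (0:ℝ) ≤ max 1 (L^3) := le_trans zero_le_one hmx1
  have hMeR : M / e ≤ R := by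
    have h1 : M / e ≤ (M + J) / e := by
      exact (div_le_div_iff_of_pos_right he).mpr (by linarith)
    have h2 : (M + J) / e ≤ (M + J) / e * max 1 (L^3) := by
      nlinarith [div_nonneg (by linarith : (0:ℝ) ≤ M + J) he.le]
    linarith
  intro k
  induction k with
  | zero =>
    have hg1c : ContinuousOn (fun s : ℝ => s * ρ s) (Icc 0 L) := continuousOn_id.mul hρc
    have hg1b : ∀ t ∈ Icc (0:ℝ) L, |t * ρ t| ≤ M * t ^ 1 / ((Nat.factorial 1 : ℕ) : ℝ) := by
      intro t ht
      have h1 : |t * ρ t| = t * |ρ t| := by rw [abs_mul, abs_of_nonneg ht.1]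
      have h2 : t * |ρ t| ≤ t * M := mul_le_mul_of_nonneg_left (hM t ht) ht.1
      rw [h1]
      norm_num
      linarith
    obtain ⟨G, hGeq, hGc, hGb, hIc, hIb, hId⟩ :=
      quad_step L hL EI hEIc e he hE _ hg1c M 1 hg1b
    have hiEc : ContinuousOn (fun s : ℝ => (EI s)⁻¹) (Icc 0 L) := by
      apply ContinuousOn.inv₀ hEIc (fun x hx => ne_of_gt (lt_of_lt_of_le he (hE x hx)))
    have hiEb : ∀ t ∈ Icc (0:ℝ) L, |(EI t)⁻¹| ≤ (1/e) * t ^ 0 / ((Nat.factorial 0 : ℕ) : ℝ) := by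
      intro t ht
      have h2 : e ≤ |EI t| := le_trans (hE t ht) (le_abs_self _)
      have h4 : 1 / |EI t| ≤ 1 / e := one_div_le_one_div_of_le he h2
      rw [abs_inv, pow_zero, Nat.factorial_zero, Nat.cast_one]
      calc |EI t|⁻¹ = 1 / |EI t| := (one_div _).symm
        _ ≤ 1 / e := h4
        _ = 1 / e * 1 / 1 := by ring
    have hPc := cont_prim hL.le hiEc
    have hPb := prim_bound hL.le hiEc hiEb
    have hP2c := cont_prim hL.le hPc
    have hP2b := prim_bound hL.le hPc hPb
    have hrepr : ∀ x : ℝ, genH ρ EI J (0+1) x = -(∫ s₁ in (0:ℝ)..x, G s₁)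
        + J * ∫ s₁ in (0:ℝ)..x, ∫ s₂ in (0:ℝ)..s₁, (EI s₂)⁻¹ := by
      intro x
      show genH ρ EI J 1 x = _
      simp only [genH, one_div]
      rw [hGeq x]
    have hreprf := funext hrepr
    refine ⟨?_, ?_, ?_⟩
    · rw [hreprf]
      exact hIc.neg.add (continuousOn_const.mul hP2c)
    · intro x hx
      rw [hrepr x]
      have b1 := hIb x hx
      have b2 := hP2b x hx
      norm_num [Nat.factorial] at b1 b2 ⊢
      have hx1 : (0:ℝ) ≤ x := hx.1
      have hx3 : x^3 ≤ max 1 (L^3) := le_trans (pow_le_pow_left₀ hx1 hx.2 3) hmxL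
      have h5 : x^5 ≤ max 1 (L^3) * x^2 := by
        nlinarith [mul_le_mul_of_nonneg_right hx3 (sq_nonneg x)]
      have hA : 0 ≤ M/e := div_nonneg hMnn he.le
      have hB : 0 ≤ J/e := div_nonneg hJ he.le
      have p1 : M/e * x^5 ≤ M/e * (max 1 (L^3) * x^2) := mul_le_mul_of_nonneg_left h5 hA
      have p2 : J/e * x^2 * 1 ≤ J/e * x^2 * max 1 (L^3) :=
        mul_le_mul_of_nonneg_left hmx1 (by positivity)
      have p3 : ((M+J)/e * max 1 (L^3)) * x^2 ≤ R * x^2 :=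
        mul_le_mul_of_nonneg_right hRb (sq_nonneg x)
      have hsplit : (M+J)/e = M/e + J/e := add_div M J e
      have q1 : 0 ≤ M/e * (max 1 (L^3) * x^2) :=
        mul_nonneg hA (mul_nonneg hmx0 (sq_nonneg x))
      calc |(-(∫ s₁ in (0:ℝ)..x, G s₁)) + J * ∫ s₁ in (0:ℝ)..x, ∫ s₂ in (0:ℝ)..s₁, (EI s₂)⁻¹|
          ≤ |∫ s₁ in (0:ℝ)..x, G s₁|
            + J * |∫ s₁ in (0:ℝ)..x, ∫ s₂ in (0:ℝ)..s₁, (EI s₂)⁻¹| := by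
            rw [← abs_neg (∫ s₁ in (0:ℝ)..x, G s₁)]
            refine le_trans (abs_add_le _ _) ?_
            rw [abs_mul, abs_of_nonneg hJ]
        _ ≤ R * x^2 / 2 := by
            have b2' := mul_le_mul_of_nonneg_left b2 hJ
            rw [hsplit] at p3
            ring_nf at b1 b2' p1 p2 p3 q1 ⊢
            linarith
    · intro x hx
      refine ⟨-(G x) + J * ∫ s₂ in (0:ℝ)..x, (EI s₂)⁻¹, ?_, ?_⟩
      · rw [hreprf]
        exact ((hId x hx).neg).add ((ftc_within hPc hx).const_mul J)
      · have b1 := hGb x hx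
        have b2 := hPb x hx
        norm_num [Nat.factorial] at b1 b2 ⊢
        have hx1 : (0:ℝ) ≤ x := hx.1
        have hx3 : x^3 ≤ max 1 (L^3) := le_trans (pow_le_pow_left₀ hx1 hx.2 3) hmxL
        have h4 : x^4 ≤ max 1 (L^3) * x := by
          nlinarith [mul_le_mul_of_nonneg_right hx3 hx1]
        have hA : 0 ≤ M/e := div_nonneg hMnn he.le
        have hB : 0 ≤ J/e := div_nonneg hJ he.le
        have p1 : M/e * x^4 ≤ M/e * (max 1 (L^3) * x) := mul_le_mul_of_nonneg_left h4 hA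
        have p2 : J/e * x * 1 ≤ J/e * x * max 1 (L^3) :=
          mul_le_mul_of_nonneg_left hmx1 (by positivity)
        have p3 : ((M+J)/e * max 1 (L^3)) * x ≤ R * x :=
          mul_le_mul_of_nonneg_right hRb hx1
        have hsplit : (M+J)/e = M/e + J/e := add_div M J e
        have q1 : 0 ≤ M/e * (max 1 (L^3) * x) := mul_nonneg hA (mul_nonneg hmx0 hx1)
        calc |(-(G x)) + J * ∫ s₂ in (0:ℝ)..x, (EI s₂)⁻¹|
            ≤ |G x| + J * |∫ s₂ in (0:ℝ)..x, (EI s₂)⁻¹| := by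
              rw [← abs_neg (G x)]
              refine le_trans (abs_add_le _ _) ?_
              rw [abs_mul, abs_of_nonneg hJ]
          _ ≤ R * x := by
              have b2' := mul_le_mul_of_nonneg_left b2 hJ
              rw [hsplit] at p3
              ring_nf at b1 b2' p1 p2 p3 q1 ⊢
              linarith
  | succ n ih =>
    obtain ⟨ihc, ihb, -⟩ := ih
    have hgc : ContinuousOn (fun s => ρ s * genH ρ EI J (n+1) s) (Icc 0 L) := hρc.mul ihc
    have hgb : ∀ t ∈ Icc (0:ℝ) L, |ρ t * genH ρ EI J (n+1) t| ≤
        (M * R^(n+1)) * t ^ (4*n+2) / ((4*n+2).factorial : ℝ) := by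
      intro t ht
      rw [abs_mul]
      calc |ρ t| * |genH ρ EI J (n+1) t|
          ≤ M * (R^(n+1) * t^(4*n+2) / ((4*n+2).factorial : ℝ)) :=
            mul_le_mul (hM t ht) (ihb t ht) (abs_nonneg _) hMnn
        _ = (M * R^(n+1)) * t ^ (4*n+2) / ((4*n+2).factorial : ℝ) := by ring
    obtain ⟨G, hGeq, hGc, hGb, hIc, hIb, hId⟩ :=
      quad_step L hL EI hEIc e he hE _ hgc (M * R^(n+1)) (4*n+2) hgb
    have hrepr : ∀ x : ℝ, genH ρ EI J (n+1+1) x = -(∫ s₁ in (0:ℝ)..x, G s₁) := by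
      intro x
      show genH ρ EI J (n+2) x = _
      simp only [genH]
      rw [hGeq x]
    have hreprf := funext hrepr
    have hCe : (M * R^(n+1)) / e ≤ R^(n+1+1) := by
      calc (M * R^(n+1))/e = (M/e) * R^(n+1) := by ring
        _ ≤ R * R^(n+1) := mul_le_mul_of_nonneg_right hMeR (pow_nonneg hR.le _)
        _ = R^(n+1+1) := by ring
    refine ⟨?_, ?_, ?_⟩
    · rw [hreprf]
      exact hIc.neg
    · intro x hx
      have hx1 : (0:ℝ) ≤ x := hx.1
      rw [hrepr x, abs_neg]
      have h2 : 4*(n+1)+2 = (4*n+2)+4 := by ring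
      rw [h2]
      calc |∫ s₁ in (0:ℝ)..x, G s₁|
          ≤ (M * R^(n+1))/e * x^((4*n+2)+4) / ((((4*n+2)+4).factorial : ℕ) : ℝ) := hIb x hx
        _ ≤ R^(n+1+1) * x^((4*n+2)+4) / ((((4*n+2)+4).factorial : ℕ) : ℝ) := by gcongr
    · intro x hx
      have hx1 : (0:ℝ) ≤ x := hx.1
      refine ⟨-(G x), ?_, ?_⟩
      · rw [hreprf]
        exact (hId x hx).neg
      · rw [abs_neg]
        have h2 : 4*(n+1)+1 = (4*n+2)+3 := by ring
        rw [h2]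
        calc |G x|
            ≤ (M * R^(n+1))/e * x^((4*n+2)+3) / ((((4*n+2)+3).factorial : ℕ) : ℝ) := hGb x hx
          _ ≤ R^(n+1+1) * x^((4*n+2)+3) / ((((4*n+2)+3).factorial : ℕ) : ℝ) := by gcongr

/-- with `R₂ = ((max ρ + J)/(min EI))·max{1,L³}`, for every `k ≥ 1` and
`x ∈ [0,L]`, `|h_k(x)| ≤ R₂^k x^(4k-2)/(4k-2)!` and `|h_k'(x)| ≤ R₂^k x^(4k-3)/(4k-3)!`. -/
theorem stmt3 (L m J : ℝ) (hL : 0 < L) (hm : 0 < m) (hJ : 0 < J)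
    (ρ EI : ℝ → ℝ)
    (hρ : ContDiffOn ℝ 4 ρ (Set.Icc 0 L)) (hEI : ContDiffOn ℝ 4 EI (Set.Icc 0 L))
    (hρpos : ∃ c > 0, ∀ x ∈ Set.Icc (0:ℝ) L, c ≤ ρ x)
    (hEIpos : ∃ c > 0, ∀ x ∈ Set.Icc (0:ℝ) L, c ≤ EI x)
    (R₂ : ℝ)
    (hR₂ : R₂ = (sSup (ρ '' Set.Icc 0 L) + J) / sInf (EI '' Set.Icc 0 L) * max 1 (L ^ 3))
    (k : ℕ) (hk : 1 ≤ k) :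
    ∀ x ∈ Set.Icc (0:ℝ) L,
      |genH ρ EI J k x| ≤ R₂ ^ k * x ^ (4 * k - 2) / ((4 * k - 2).factorial : ℝ) ∧
      |derivWithin (genH ρ EI J k) (Set.Icc 0 L) x| ≤
        R₂ ^ k * x ^ (4 * k - 3) / ((4 * k - 3).factorial : ℝ) := by
  obtain ⟨cρ, hcρ, hcρle⟩ := hρpos
  obtain ⟨cE, hcE, hcEle⟩ := hEIpos
  have hρc : ContinuousOn ρ (Icc 0 L) := hρ.continuousOn
  have hEIc : ContinuousOn EI (Icc 0 L) := hEI.continuousOn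
  set M := sSup (ρ '' Set.Icc 0 L) with hMdef
  set e := sInf (EI '' Set.Icc 0 L) with hedef
  have hmem0 : (0:ℝ) ∈ Icc (0:ℝ) L := ⟨le_rfl, hL.le⟩
  have hbddA : BddAbove (ρ '' Icc 0 L) :=
    (isCompact_Icc.image_of_continuousOn hρc).bddAbove
  have hMx : ∀ x ∈ Icc (0:ℝ) L, ρ x ≤ M := fun x hx => le_csSup hbddA ⟨x, hx, rfl⟩
  have hM : ∀ x ∈ Icc (0:ℝ) L, |ρ x| ≤ M := by
    intro x hx
    rw [abs_of_pos (lt_of_lt_of_le hcρ (hcρle x hx))]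
    exact hMx x hx
  have hMnn : 0 ≤ M := le_trans hcρ.le (le_trans (hcρle 0 hmem0) (hMx 0 hmem0))
  have hbddB : BddBelow (EI '' Icc 0 L) :=
    (isCompact_Icc.image_of_continuousOn hEIc).bddBelow
  have hE : ∀ x ∈ Icc (0:ℝ) L, e ≤ EI x := fun x hx => csInf_le hbddB ⟨x, hx, rfl⟩
  have hne : (EI '' Icc (0:ℝ) L).Nonempty := ⟨EI 0, 0, hmem0, rfl⟩
  have he : 0 < e := by
    apply lt_of_lt_of_le hcE
    apply le_csInf hne
    rintro b ⟨y, hy, rfl⟩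
    exact hcEle y hy
  have hR : 0 < R₂ := by
    rw [hR₂]
    apply mul_pos (div_pos (by linarith) he)
    exact lt_of_lt_of_le one_pos (le_max_left _ _)
  have hRb : (M + J) / e * max 1 (L ^ 3) ≤ R₂ := le_of_eq hR₂.symm
  obtain ⟨k', rfl⟩ : ∃ k', k = k' + 1 := ⟨k - 1, by omega⟩
  obtain ⟨hcont, hval, hder⟩ :=
    genH_aux L J hL hJ.le ρ EI hρc hEIc M e hMnn hM he hE R₂ hR hRb k'
  intro x hx
  have e1 : 4 * (k' + 1) - 2 = 4 * k' + 2 := by omega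
  have e2 : 4 * (k' + 1) - 3 = 4 * k' + 1 := by omega
  rw [e1, e2]
  refine ⟨hval x hx, ?_⟩
  obtain ⟨d, hd, hdb⟩ := hder x hx
  rw [hd.derivWithin ((uniqueDiffOn_Icc hL) x hx)]
  exact hdb
end

section
/- Let T > 0, s ∈ (1,2) and y_1, y_2 ∈ G_s[0,T], and define w(x,t) = Σ_{k≥0} g_k(x) y_1^{(2k)}(t) + Σ_{k≥0} h_k(x) y_2^{(2k)}(t) for (x,t) ∈ [0,L]×[0,T]. If y_1 and y_2 satisfy the infinite-order differential equation Σ_{k≥0} g_k'(L) y_1^{(2k)}(t) + Σ_{k≥0} h_k'(L) y_2^{(2k)}(t) = 0 for all t ∈ [0,T], then w_x(L,t) = 0 for all t ∈ [0,T]. -/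
open Set Filter intervalIntegral

/-- The formal series solution `w(x,t) = Σ_k g_k(x) y₁⁽²ᵏ⁾(t) + Σ_k h_k(x) y₂⁽²ᵏ⁾(t)`. -/
noncomputable def wSol (g h : ℕ → ℝ → ℝ) (y₁ y₂ : ℝ → ℝ) (x t : ℝ) : ℝ :=
  ∑' k : ℕ, (g k x * iteratedDeriv (2 * k) y₁ t + h k x * iteratedDeriv (2 * k) y₂ t)

open MeasureTheory Topology

section Helpers

lemma prim_layer {L C : ℝ} (hL : 0 < L) (hC : 0 ≤ C) (n : ℕ) {u : ℝ → ℝ}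
    (hu : ContinuousOn u (Set.Icc 0 L))
    (hub : ∀ x ∈ Set.Icc (0:ℝ) L, |u x| ≤ C * x ^ n / n.factorial) :
    (∀ x ∈ Set.Icc (0:ℝ) L,
        HasDerivWithinAt (fun y => ∫ t in (0:ℝ)..y, u t) (u x) (Set.Icc 0 L) x) ∧
    (∀ x ∈ Set.Icc (0:ℝ) L,
        |∫ t in (0:ℝ)..x, u t| ≤ C * x ^ (n+1) / (n+1).factorial) := by
  have hint : ∀ x ∈ Set.Icc (0:ℝ) L, IntervalIntegrable u MeasureTheory.volume 0 x := by
    intro x hx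
    apply ContinuousOn.intervalIntegrable
    apply hu.mono
    rw [Set.uIcc_of_le hx.1]
    exact Set.Icc_subset_Icc le_rfl hx.2
  constructor
  · intro x hx
    haveI : Fact (x ∈ Set.Icc (0:ℝ) L) := ⟨hx⟩
    exact intervalIntegral.integral_hasDerivWithinAt_right (hint x hx)
      (hu.stronglyMeasurableAtFilter_nhdsWithin measurableSet_Icc x) (hu x hx)
  · intro x hx
    have h1 : |∫ t in (0:ℝ)..x, u t| ≤ |∫ t in (0:ℝ)..x, C * t ^ n / n.factorial| := by
      rw [← Real.norm_eq_abs]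
      apply intervalIntegral.norm_integral_le_abs_of_norm_le
      · apply MeasureTheory.ae_restrict_of_forall_mem measurableSet_uIoc
        intro t ht
        rw [Set.uIoc_of_le hx.1] at ht
        rw [Real.norm_eq_abs]
        exact hub t ⟨le_of_lt ht.1, ht.2.trans hx.2⟩
      · exact (Continuous.intervalIntegrable (by continuity) 0 x)
    have h2 : (∫ t in (0:ℝ)..x, C * t ^ n / n.factorial)
        = C * x ^ (n+1) / (n+1).factorial := by
      have : ∀ t : ℝ, C * t ^ n / n.factorial = (C / n.factorial) * t ^ n := fun t => by ring
      simp only [this]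
      rw [intervalIntegral.integral_const_mul, integral_pow, Nat.factorial_succ]
      have hn : ((n.factorial : ℝ)) ≠ 0 := by positivity
      rw [zero_pow (Nat.succ_ne_zero n)]
      push_cast
      field_simp
      ring_nf
    rw [h2] at h1
    refine h1.trans (le_of_eq (abs_of_nonneg ?_))
    have : (0:ℝ) ≤ x ^ (n+1) := pow_nonneg hx.1 _
    positivity
lemma quad_layer {L c R C : ℝ} (hL : 0 < L) (hc : 0 < c) (hC : 0 ≤ C) (hR : 0 ≤ R)
    {ρ EI f : ℝ → ℝ} (hρ : ContinuousOn ρ (Set.Icc 0 L)) (hEI : ContinuousOn EI (Set.Icc 0 L))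
    (hEIc : ∀ x ∈ Set.Icc (0:ℝ) L, c ≤ EI x) (hρR : ∀ x ∈ Set.Icc (0:ℝ) L, |ρ x| ≤ R)
    (n : ℕ) (hf : ContinuousOn f (Set.Icc 0 L))
    (hfb : ∀ x ∈ Set.Icc (0:ℝ) L, |f x| ≤ C * x ^ n / n.factorial) :
    ∃ Q' : ℝ → ℝ, ContinuousOn Q' (Set.Icc 0 L) ∧
      (∀ x ∈ Set.Icc (0:ℝ) L, HasDerivWithinAt
        (fun y => ∫ s₁ in (0:ℝ)..y, ∫ s₂ in (0:ℝ)..s₁, ∫ s₃ in (0:ℝ)..s₂, ∫ s₄ in (0:ℝ)..s₃,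
            ρ s₄ * f s₄ / EI s₂) (Q' x) (Set.Icc 0 L) x) ∧
      (∀ x ∈ Set.Icc (0:ℝ) L, |Q' x| ≤ R / c * C * x ^ (n+3) / (n+3).factorial) ∧
      (∀ x ∈ Set.Icc (0:ℝ) L,
        |∫ s₁ in (0:ℝ)..x, ∫ s₂ in (0:ℝ)..s₁, ∫ s₃ in (0:ℝ)..s₂, ∫ s₄ in (0:ℝ)..s₃,
            ρ s₄ * f s₄ / EI s₂| ≤ R / c * C * x ^ (n+4) / (n+4).factorial) := by
  have hEIne : ∀ x ∈ Set.Icc (0:ℝ) L, EI x ≠ 0 := fun x hx => (lt_of_lt_of_le hc (hEIc x hx)).ne'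
  -- level 1
  have hu₀ : ContinuousOn (fun t => ρ t * f t) (Set.Icc 0 L) := hρ.mul hf
  have hu₀b : ∀ x ∈ Set.Icc (0:ℝ) L, |ρ x * f x| ≤ (R * C) * x ^ n / n.factorial := by
    intro x hx
    rw [abs_mul]
    calc |ρ x| * |f x| ≤ R * (C * x ^ n / n.factorial) :=
          mul_le_mul (hρR x hx) (hfb x hx) (abs_nonneg _) hR
      _ = (R * C) * x ^ n / n.factorial := by ring
  obtain ⟨hd₁, hb₁⟩ := prim_layer hL (by positivity) n hu₀ hu₀b
  have hc₁ : ContinuousOn (fun y => ∫ t in (0:ℝ)..y, ρ t * f t) (Set.Icc 0 L) :=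
    fun x hx => (hd₁ x hx).continuousWithinAt
  obtain ⟨hd₂, hb₂⟩ := prim_layer hL (by positivity) (n+1) hc₁ hb₁
  have hc₂ : ContinuousOn (fun y => ∫ t in (0:ℝ)..y, (∫ r in (0:ℝ)..t, ρ r * f r))
      (Set.Icc 0 L) := fun x hx => (hd₂ x hx).continuousWithinAt
  -- G level
  have hGcont : ContinuousOn
      (fun t => (EI t)⁻¹ * ∫ r in (0:ℝ)..t, (∫ q in (0:ℝ)..r, ρ q * f q)) (Set.Icc 0 L) :=
    (hEI.inv₀ hEIne).mul hc₂
  have hGb : ∀ x ∈ Set.Icc (0:ℝ) L,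
      |(EI x)⁻¹ * ∫ r in (0:ℝ)..x, (∫ q in (0:ℝ)..r, ρ q * f q)|
        ≤ (R / c * C) * x ^ (n+2) / (n+2).factorial := by
    intro x hx
    rw [abs_mul, abs_inv]
    have h1 : |EI x|⁻¹ ≤ c⁻¹ := by
      apply inv_anti₀ hc
      rw [abs_of_pos (lt_of_lt_of_le hc (hEIc x hx))]
      exact hEIc x hx
    calc |EI x|⁻¹ * |∫ r in (0:ℝ)..x, (∫ q in (0:ℝ)..r, ρ q * f q)|
        ≤ c⁻¹ * ((R * C) * x ^ (n+2) / (n+2).factorial) :=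
          mul_le_mul h1 (hb₂ x hx) (abs_nonneg _) (by positivity)
      _ = (R / c * C) * x ^ (n+2) / (n+2).factorial := by
          field_simp
  obtain ⟨hd₃, hb₃⟩ := prim_layer hL (by positivity) (n+2) hGcont hGb
  have hc₃ : ContinuousOn (fun y => ∫ t in (0:ℝ)..y,
      (EI t)⁻¹ * ∫ r in (0:ℝ)..t, (∫ q in (0:ℝ)..r, ρ q * f q)) (Set.Icc 0 L) :=
    fun x hx => (hd₃ x hx).continuousWithinAt
  obtain ⟨hd₄, hb₄⟩ := prim_layer hL (by positivity) (n+3) hc₃ hb₃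
  -- key rewriting
  have inner2 : ∀ s₂ : ℝ, (∫ s₃ in (0:ℝ)..s₂, ∫ s₄ in (0:ℝ)..s₃, ρ s₄ * f s₄ / EI s₂)
      = (EI s₂)⁻¹ * ∫ r in (0:ℝ)..s₂, (∫ q in (0:ℝ)..r, ρ q * f q) := by
    intro s₂
    have e1 : ∀ s₃ : ℝ, (∫ s₄ in (0:ℝ)..s₃, ρ s₄ * f s₄ / EI s₂)
        = (EI s₂)⁻¹ * ∫ q in (0:ℝ)..s₃, ρ q * f q := by
      intro s₃
      rw [← intervalIntegral.integral_const_mul]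
      apply intervalIntegral.integral_congr
      intro s₄ _
      ring
    rw [intervalIntegral.integral_congr (g := fun s₃ =>
        (EI s₂)⁻¹ * ∫ q in (0:ℝ)..s₃, ρ q * f q) (fun s₃ _ => e1 s₃),
      intervalIntegral.integral_const_mul]
  have key : ∀ y : ℝ, (∫ s₁ in (0:ℝ)..y, ∫ s₂ in (0:ℝ)..s₁, ∫ s₃ in (0:ℝ)..s₂,
      ∫ s₄ in (0:ℝ)..s₃, ρ s₄ * f s₄ / EI s₂)
      = ∫ s₁ in (0:ℝ)..y, (∫ t in (0:ℝ)..s₁,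
          (EI t)⁻¹ * ∫ r in (0:ℝ)..t, (∫ q in (0:ℝ)..r, ρ q * f q)) := by
    intro y
    apply intervalIntegral.integral_congr
    intro s₁ _
    apply intervalIntegral.integral_congr
    intro s₂ _
    exact inner2 s₂
  have keyfun : (fun y => ∫ s₁ in (0:ℝ)..y, ∫ s₂ in (0:ℝ)..s₁, ∫ s₃ in (0:ℝ)..s₂,
      ∫ s₄ in (0:ℝ)..s₃, ρ s₄ * f s₄ / EI s₂)
      = (fun y => ∫ s₁ in (0:ℝ)..y, (∫ t in (0:ℝ)..s₁,
          (EI t)⁻¹ * ∫ r in (0:ℝ)..t, (∫ q in (0:ℝ)..r, ρ q * f q))) := funext key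
  refine ⟨fun x => ∫ t in (0:ℝ)..x,
      (EI t)⁻¹ * ∫ r in (0:ℝ)..t, (∫ q in (0:ℝ)..r, ρ q * f q), hc₃, ?_, hb₃, ?_⟩
  · intro x hx
    rw [keyfun]
    exact hd₄ x hx
  · intro x hx
    rw [key x]
    exact hb₄ x hx
lemma seq_master {L c R C₁ : ℝ} (hL : 0 < L) (hc : 0 < c) (hC₁ : 0 ≤ C₁) (hR : 0 ≤ R)
    {ρ EI : ℝ → ℝ} (hρ : ContinuousOn ρ (Set.Icc 0 L)) (hEI : ContinuousOn EI (Set.Icc 0 L))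
    (hEIc : ∀ x ∈ Set.Icc (0:ℝ) L, c ≤ EI x) (hρR : ∀ x ∈ Set.Icc (0:ℝ) L, |ρ x| ≤ R)
    {F : ℕ → ℝ → ℝ}
    (hF1c : ContinuousOn (F 1) (Set.Icc 0 L))
    (hF1b : ∀ x ∈ Set.Icc (0:ℝ) L, |F 1 x| ≤ C₁)
    (hrec : ∀ k : ℕ, F (k+2) = fun x => -(∫ s₁ in (0:ℝ)..x, ∫ s₂ in (0:ℝ)..s₁,
        ∫ s₃ in (0:ℝ)..s₂, ∫ s₄ in (0:ℝ)..s₃, ρ s₄ * F (k+1) s₄ / EI s₂)) :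
    ∃ Fd : ℕ → ℝ → ℝ, ∀ j : ℕ,
      ContinuousOn (F (j+1)) (Set.Icc 0 L) ∧
      ContinuousOn (Fd j) (Set.Icc 0 L) ∧
      (∀ x ∈ Set.Icc (0:ℝ) L, HasDerivWithinAt (F (j+2)) (-(Fd j x)) (Set.Icc 0 L) x) ∧
      (∀ x ∈ Set.Icc (0:ℝ) L,
        |F (j+1) x| ≤ C₁ * (R/c)^j * L^(4*j) / (4*j).factorial) ∧
      (∀ x ∈ Set.Icc (0:ℝ) L,
        |Fd j x| ≤ R/c * (C₁ * (R/c)^j) * L^(4*j+3) / (4*j+3).factorial) := by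
  have aux : ∀ j : ℕ, ContinuousOn (F (j+1)) (Set.Icc 0 L) ∧
      ∀ x ∈ Set.Icc (0:ℝ) L, |F (j+1) x| ≤ (C₁ * (R/c)^j) * x^(4*j) / (4*j).factorial := by
    intro j
    induction j with
    | zero =>
      refine ⟨hF1c, fun x hx => ?_⟩
      simpa using hF1b x hx
    | succ j ih =>
      obtain ⟨hQc, hQd, hQb, hNb⟩ :=
        (quad_layer hL hc (by positivity) hR hρ hEI hEIc hρR (4*j) ih.1 ih.2).choose_spec
      constructor
      · rw [hrec j]
        exact fun x hx => ((hQd x hx).continuousWithinAt).neg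
      · intro x hx
        rw [hrec j]
        rw [abs_neg]
        have hb := hNb x hx
        have e4 : 4*j+4 = 4*(j+1) := by omega
        rw [e4] at hb
        exact hb.trans (le_of_eq (by ring))
  have H : ∀ j : ℕ, ∃ Q' : ℝ → ℝ, ContinuousOn Q' (Set.Icc 0 L) ∧
      (∀ x ∈ Set.Icc (0:ℝ) L, HasDerivWithinAt
        (fun y => ∫ s₁ in (0:ℝ)..y, ∫ s₂ in (0:ℝ)..s₁, ∫ s₃ in (0:ℝ)..s₂, ∫ s₄ in (0:ℝ)..s₃,
            ρ s₄ * F (j+1) s₄ / EI s₂) (Q' x) (Set.Icc 0 L) x) ∧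
      (∀ x ∈ Set.Icc (0:ℝ) L, |Q' x| ≤ R / c * (C₁ * (R/c)^j) * x ^ (4*j+3) / (4*j+3).factorial) ∧
      (∀ x ∈ Set.Icc (0:ℝ) L,
        |∫ s₁ in (0:ℝ)..x, ∫ s₂ in (0:ℝ)..s₁, ∫ s₃ in (0:ℝ)..s₂, ∫ s₄ in (0:ℝ)..s₃,
            ρ s₄ * F (j+1) s₄ / EI s₂| ≤ R / c * (C₁ * (R/c)^j) * x ^ (4*j+4) / (4*j+4).factorial) :=
    fun j => quad_layer hL hc (by positivity) hR hρ hEI hEIc hρR (4*j) (aux j).1 (aux j).2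
  choose Fd hFdc hFdd hFdb _hFnb using H
  refine ⟨Fd, fun j => ⟨(aux j).1, hFdc j, ?_, ?_, ?_⟩⟩
  · intro x hx
    rw [hrec j]
    exact (hFdd j x hx).neg
  · intro x hx
    refine ((aux j).2 x hx).trans ?_
    gcongr <;> first
      | exact mul_nonneg hC₁ (by positivity)
      | exact mul_nonneg (by positivity) (mul_nonneg hC₁ (by positivity))
      | exact hx.1
      | exact hx.2
      | positivity
  · intro x hx
    refine (hFdb j x hx).trans ?_
    gcongr <;> first
      | exact mul_nonneg hC₁ (by positivity)
      | exact mul_nonneg (by positivity) (mul_nonneg hC₁ (by positivity))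
      | exact hx.1
      | exact hx.2
      | positivity
lemma summable_gevrey {Q D s : ℝ} (hs0 : 0 ≤ s) (hs : s < 2) (hQ : 0 ≤ Q) (hD : 0 ≤ D) :
    Summable (fun k : ℕ => Q^k * D^(2*k+1) * ((2*k).factorial : ℝ)^s / ((4*k).factorial : ℝ)) := by
  set t : ℕ → ℝ := fun k => Q^k * D^(2*k+1) * ((2*k).factorial : ℝ)^s / ((4*k).factorial : ℝ)
    with ht
  have tnonneg : ∀ k, 0 ≤ t k := by
    intro k
    apply div_nonneg _ (by positivity)
    exact mul_nonneg (mul_nonneg (pow_nonneg hQ _) (pow_nonneg hD _)) (by positivity)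
  set f : ℕ → ℝ := fun k => Q * D^2 * (((2*k+1)*(2*k+2) : ℕ) : ℝ)^s /
      ((((4*k+1)*(4*k+2)*(4*k+3)*(4*k+4) : ℕ)) : ℝ) with hf
  have hstep : ∀ k : ℕ, t (k+1) = t k * f k := by
    intro k
    have e1 : ((2*(k+1)).factorial : ℝ) ^ s
        = ((2*k).factorial : ℝ)^s * (((2*k+1) * (2*k+2) : ℕ) : ℝ)^s := by
      rw [← Real.mul_rpow (by positivity) (by positivity)]
      congr 1
      have h2 : 2*(k+1) = (2*k+1)+1 := by omega
      rw [h2]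
      push_cast [Nat.factorial_succ]
      ring
    have e2 : ((4*(k+1)).factorial : ℝ)
        = ((4*k).factorial : ℝ) * (((4*k+1)*(4*k+2)*(4*k+3)*(4*k+4) : ℕ) : ℝ) := by
      have h4 : 4*(k+1) = (((4*k+1)+1)+1)+1 := by omega
      rw [h4]
      push_cast [Nat.factorial_succ]
      ring
    rw [ht, hf]
    simp only
    rw [e1, e2]
    have hfac : ((4*k).factorial : ℝ) ≠ 0 := by positivity
    have hprod : ((((4*k+1)*(4*k+2)*(4*k+3)*(4*k+4) : ℕ)) : ℝ) ≠ 0 := by positivity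
    field_simp
    ring
  have hfbound : ∀ᶠ k in atTop, f k ≤ 1/2 := by
    have h1 : Tendsto (fun k : ℕ => Q * D^2 * ((2:ℝ)*k+2)^(2*s-4)) atTop (𝓝 0) := by
      have hbase : Tendsto (fun k : ℕ => (2:ℝ)*k+2) atTop atTop := by
        apply Filter.Tendsto.atTop_add _ tendsto_const_nhds
        exact (tendsto_natCast_atTop_atTop).const_mul_atTop two_pos
      have hrp : Tendsto (fun x : ℝ => x ^ (2*s-4)) atTop (𝓝 0) := by
        have h42 : (0:ℝ) < 4 - 2*s := by linarith
        have := tendsto_rpow_neg_atTop h42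
        simpa [show -(4-2*s) = 2*s-4 by ring] using this
      simpa using (hrp.comp hbase).const_mul (Q * D^2)
    have h2 : ∀ᶠ k : ℕ in atTop, f k ≤ Q * D^2 * ((2:ℝ)*k+2)^(2*s-4) := by
      filter_upwards [eventually_ge_atTop 1] with k hk
      rw [hf]
      simp only
      have hb2 : (0:ℝ) < 2*(k:ℝ)+2 := by positivity
      have hnum : (((2*k+1)*(2*k+2) : ℕ) : ℝ)^s ≤ ((2*(k:ℝ)+2)^(2:ℕ))^s := by
        apply Real.rpow_le_rpow (by positivity) _ hs0
        push_cast
        nlinarith [hb2]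
      have hden : ((2*(k:ℝ)+2)^(4:ℕ)) ≤ ((((4*k+1)*(4*k+2)*(4*k+3)*(4*k+4) : ℕ)) : ℝ) := by
        push_cast
        have hk1 : (1:ℝ) ≤ (k:ℝ) := by exact_mod_cast hk
        nlinarith [hk1, sq_nonneg ((k:ℝ))]
      calc Q * D^2 * (((2*k+1)*(2*k+2) : ℕ) : ℝ)^s /
            ((((4*k+1)*(4*k+2)*(4*k+3)*(4*k+4) : ℕ)) : ℝ)
          ≤ Q * D^2 * ((2*(k:ℝ)+2)^(2:ℕ))^s / ((2*(k:ℝ)+2)^(4:ℕ)) := by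
            apply div_le_div₀ (by positivity) _ (by positivity) hden
            exact mul_le_mul_of_nonneg_left hnum (by positivity)
        _ = Q * D^2 * ((2:ℝ)*k+2)^(2*s-4) := by
            have hpp : ((2*(k:ℝ)+2)^(2:ℕ))^s / ((2*(k:ℝ)+2)^(4:ℕ))
                = (2*(k:ℝ)+2)^(2*s-4) := by
              rw [← Real.rpow_natCast (2*(k:ℝ)+2) 2, ← Real.rpow_natCast (2*(k:ℝ)+2) 4,
                ← Real.rpow_mul (le_of_lt hb2), ← Real.rpow_sub hb2]
              norm_num
            rw [mul_div_assoc, hpp]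
    filter_upwards [h2, h1.eventually (eventually_le_nhds (by norm_num : (0:ℝ) < 1/2))] with k ha hb
    exact ha.trans hb
  apply summable_of_ratio_norm_eventually_le (r := 1/2) (by norm_num)
  filter_upwards [hfbound] with k hk
  rw [Real.norm_eq_abs, Real.norm_eq_abs, abs_of_nonneg (tnonneg _), abs_of_nonneg (tnonneg _),
    hstep k]
  calc t k * f k ≤ t k * (1/2) := mul_le_mul_of_nonneg_left hk (tnonneg k)
    _ = 1/2 * t k := by ring
lemma nat_fact_add_le (a d : ℕ) : (a+d).factorial ≤ a.factorial * (a+d)^d := by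
  induction d with
  | zero => simp
  | succ d ih =>
    rw [show a + (d+1) = (a+d)+1 from rfl, Nat.factorial_succ]
    calc (a+d+1) * (a+d).factorial ≤ (a+d+1) * (a.factorial * (a+d)^d) :=
          Nat.mul_le_mul_left _ ih
      _ ≤ (a+d+1) * (a.factorial * (a+d+1)^d) := by
          apply Nat.mul_le_mul_left
          apply Nat.mul_le_mul_left
          exact Nat.pow_le_pow_left (Nat.le_succ _) d
      _ = a.factorial * (a+d+1)^(d+1) := by ring

lemma four_mul_le_pow (k : ℕ) (hk : 1 ≤ k) : 4*k ≤ 4^k := by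
  induction k with
  | zero => omega
  | succ k ih =>
    rcases Nat.lt_or_ge k 1 with h | h
    · interval_cases k <;> norm_num
    · have h1 := ih h
      have h2 : 4 ≤ 4^k := le_trans (by omega) h1
      calc 4*(k+1) = 4*k+4 := by ring
        _ ≤ 4^k + 4^k*3 := by omega
        _ = 4^(k+1) := by ring

lemma promote {C₁ A Lm : ℝ} (hC : 0 ≤ C₁) (hA : 1 ≤ A) (hLm : 1 ≤ Lm)
    (k e f : ℕ) (hk : 1 ≤ k) (he : e ≤ k) (hf4 : f ≤ 4*k) (hef : 4*k ≤ f + 5) :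
    C₁ * A^e * Lm^f / (f.factorial : ℝ) ≤ C₁ * (1024 * A * Lm^4)^k / ((4*k).factorial : ℝ) := by
  have hA0 : (0:ℝ) ≤ A := le_trans zero_le_one hA
  have hLm0 : (0:ℝ) ≤ Lm := le_trans zero_le_one hLm
  have key : ((4*k).factorial : ℝ) ≤ (f.factorial : ℝ) * 1024^k := by
    have h1 : (4*k).factorial ≤ f.factorial * (4*k)^(4*k - f) := by
      have := nat_fact_add_le f (4*k - f)
      rwa [Nat.add_sub_cancel' hf4] at this
    have h2 : (4*k)^(4*k-f) ≤ (4*k)^5 := Nat.pow_le_pow_right (by omega) (by omega)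
    have h3 : (4*k)^5 ≤ (4^k)^5 := Nat.pow_le_pow_left (four_mul_le_pow k hk) 5
    have h4 : ((4:ℕ)^k)^5 = 1024^k := by
      rw [← pow_mul, mul_comm, pow_mul]
      norm_num
    have : (4*k).factorial ≤ f.factorial * 1024^k := by
      calc (4*k).factorial ≤ f.factorial * (4*k)^(4*k-f) := h1
        _ ≤ f.factorial * (4^k)^5 := Nat.mul_le_mul_left _ (h2.trans h3)
        _ = f.factorial * 1024^k := by rw [h4]
    exact_mod_cast this
  rw [div_le_div_iff₀ (by positivity) (by positivity)]
  calc C₁ * A^e * Lm^f * ((4*k).factorial:ℝ)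
      ≤ C₁ * A^k * Lm^(4*k) * ((f.factorial:ℝ) * 1024^k) := by
        apply mul_le_mul _ key (by positivity) (by positivity)
        have hAe : A^e ≤ A^k := pow_le_pow_right₀ hA he
        have hLf : Lm^f ≤ Lm^(4*k) := pow_le_pow_right₀ hLm hf4
        have h0 : (0:ℝ) ≤ C₁ * A^e := by positivity
        calc C₁ * A^e * Lm^f ≤ C₁ * A^e * Lm^(4*k) := mul_le_mul_of_nonneg_left hLf h0
          _ ≤ C₁ * A^k * Lm^(4*k) := by
              apply mul_le_mul_of_nonneg_right _ (by positivity)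
              exact mul_le_mul_of_nonneg_left hAe hC
    _ = C₁ * (1024*A*Lm^4)^k * (f.factorial:ℝ) := by
        rw [mul_pow, mul_pow, ← pow_mul]
        ring
lemma genG_one {L c R : ℝ} (hL : 0 < L) (hc : 0 < c) (hR : 0 ≤ R)
    {ρ EI : ℝ → ℝ} (hρc : ContinuousOn ρ (Set.Icc 0 L)) (hEIc : ContinuousOn EI (Set.Icc 0 L))
    (hEIb : ∀ x ∈ Set.Icc (0:ℝ) L, c ≤ EI x) (hρR : ∀ x ∈ Set.Icc (0:ℝ) L, |ρ x| ≤ R)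
    (m : ℝ) :
    ∃ (g1d : ℝ → ℝ) (K : ℝ), 0 ≤ K ∧
      ContinuousOn (genG ρ EI m 1) (Set.Icc 0 L) ∧ ContinuousOn g1d (Set.Icc 0 L) ∧
      (∀ x ∈ Set.Icc (0:ℝ) L, HasDerivWithinAt (genG ρ EI m 1) (g1d x) (Set.Icc 0 L) x) ∧
      (∀ x ∈ Set.Icc (0:ℝ) L, |genG ρ EI m 1 x| ≤ K) ∧
      (∀ x ∈ Set.Icc (0:ℝ) L, |g1d x| ≤ K) := by
  have hEIne : ∀ x ∈ Set.Icc (0:ℝ) L, EI x ≠ 0 := fun x hx => (lt_of_lt_of_le hc (hEIb x hx)).ne'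
  -- quadruple part with f = 1
  obtain ⟨Q', hQc, hQd, hQb, hNb⟩ := quad_layer hL hc zero_le_one hR hρc hEIc hEIb hρR 0
    (continuousOn_const (c := (1:ℝ))) (by intro x hx; simp)
  simp only [mul_one] at hQd hQb hNb
  -- the m-part : inner constant integral
  have hgen1 : genG ρ EI m 1 = fun x =>
      -(∫ s₁ in (0:ℝ)..x, ∫ s₂ in (0:ℝ)..s₁, ∫ s₃ in (0:ℝ)..s₂, ∫ s₄ in (0:ℝ)..s₃,
          ρ s₄ / EI s₂)
      - m * ∫ s₁ in (0:ℝ)..x, ∫ s₂ in (0:ℝ)..s₁, s₂ * (1 / EI s₂) := by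
    rw [show genG ρ EI m 1 = fun x =>
      -(∫ s₁ in (0:ℝ)..x, ∫ s₂ in (0:ℝ)..s₁, ∫ s₃ in (0:ℝ)..s₂, ∫ s₄ in (0:ℝ)..s₃,
          ρ s₄ / EI s₂)
      - m * ∫ s₁ in (0:ℝ)..x, ∫ s₂ in (0:ℝ)..s₁, ∫ _s₃ in (0:ℝ)..s₂, 1 / EI s₂ from rfl]
    simp only [intervalIntegral.integral_const, sub_zero, smul_eq_mul]
  have he₀ : ContinuousOn (fun u : ℝ => u * (1 / EI u)) (Set.Icc 0 L) :=
    continuousOn_id.mul (continuousOn_const.div hEIc hEIne)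
  have he₀b : ∀ x ∈ Set.Icc (0:ℝ) L, |x * (1 / EI x)| ≤ (1/c) * x ^ 1 / (1:ℕ).factorial := by
    intro x hx
    have hEIx : 0 < EI x := lt_of_lt_of_le hc (hEIb x hx)
    rw [abs_mul, abs_of_nonneg hx.1, abs_of_pos (one_div_pos.mpr hEIx)]
    have h2 : 1 / EI x ≤ 1/c := one_div_le_one_div_of_le hc (hEIb x hx)
    calc x * (1 / EI x) ≤ x * (1/c) := mul_le_mul_of_nonneg_left h2 hx.1
      _ = (1/c) * x ^ 1 / (1:ℕ).factorial := by simp [Nat.factorial]; ring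
  obtain ⟨hdP, hbP⟩ := prim_layer hL (by positivity) 1 he₀ he₀b
  have hPc : ContinuousOn (fun y => ∫ u in (0:ℝ)..y, u * (1/EI u)) (Set.Icc 0 L) :=
    fun x hx => (hdP x hx).continuousWithinAt
  obtain ⟨hdPP, hbPP⟩ := prim_layer hL (by positivity) 2 hPc hbP
  -- assemble
  refine ⟨fun x => -(Q' x) - m * (∫ u in (0:ℝ)..x, u * (1/EI u)),
    R / c * L ^ 4 / ((0+4:ℕ).factorial) + |m| * ((1/c) * L ^ 3 / ((1+2:ℕ).factorial))
      + (R / c * L ^ 3 / ((0+3:ℕ).factorial) + |m| * ((1/c) * L ^ 2 / ((1+1:ℕ).factorial))),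
    by positivity, ?_, ?_, ?_, ?_, ?_⟩
  · rw [hgen1]
    apply ContinuousOn.sub
    · have hNc : ContinuousOn (fun y => ∫ s₁ in (0:ℝ)..y, ∫ s₂ in (0:ℝ)..s₁,
          ∫ s₃ in (0:ℝ)..s₂, ∫ s₄ in (0:ℝ)..s₃, ρ s₄ / EI s₂) (Set.Icc 0 L) :=
        fun x hx => (hQd x hx).continuousWithinAt
      exact hNc.neg
    · exact continuousOn_const.mul (fun x hx => (hdPP x hx).continuousWithinAt)
  · exact (hQc.neg).sub (continuousOn_const.mul hPc)
  · intro x hx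
    rw [hgen1]
    exact ((hQd x hx).neg).sub ((hdPP x hx).const_mul m)
  · intro x hx
    rw [hgen1]
    have h1 : |(∫ s₁ in (0:ℝ)..x, ∫ s₂ in (0:ℝ)..s₁, ∫ s₃ in (0:ℝ)..s₂, ∫ s₄ in (0:ℝ)..s₃,
        ρ s₄ / EI s₂)| ≤ R / c * L ^ 4 / ((0+4:ℕ).factorial) := by
      refine (hNb x hx).trans ?_
      gcongr <;> first
        | exact hx.1
        | exact hx.2
        | positivity
    have h2 : |∫ s₁ in (0:ℝ)..x, ∫ s₂ in (0:ℝ)..s₁, s₂ * (1 / EI s₂)|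
        ≤ (1/c) * L ^ 3 / ((1+2:ℕ).factorial) := by
      refine (hbPP x hx).trans ?_
      gcongr <;> first
        | exact hx.1
        | exact hx.2
        | positivity
    simp only
    rw [sub_eq_add_neg]
    refine (abs_add_le _ _).trans ?_
    rw [abs_neg, abs_neg, abs_mul]
    have : |m| * |∫ s₁ in (0:ℝ)..x, ∫ s₂ in (0:ℝ)..s₁, s₂ * (1 / EI s₂)|
        ≤ |m| * ((1/c) * L ^ 3 / ((1+2:ℕ).factorial)) :=
      mul_le_mul_of_nonneg_left h2 (abs_nonneg m)
    have hnn : (0:ℝ) ≤ R / c * L ^ 3 / ((0+3:ℕ).factorial)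
        + |m| * ((1/c) * L ^ 2 / ((1+1:ℕ).factorial)) := by positivity
    linarith [h1, this]
  · intro x hx
    have h1 : |Q' x| ≤ R / c * L ^ 3 / ((0+3:ℕ).factorial) := by
      refine (hQb x hx).trans ?_
      gcongr <;> first
        | exact hx.1
        | exact hx.2
        | positivity
    have h2 : |∫ u in (0:ℝ)..x, u * (1/EI u)| ≤ (1/c) * L ^ 2 / ((1+1:ℕ).factorial) := by
      refine (hbP x hx).trans ?_
      gcongr <;> first
        | exact hx.1
        | exact hx.2
        | positivity
    simp only
    rw [sub_eq_add_neg]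
    refine (abs_add_le _ _).trans ?_
    rw [abs_neg, abs_neg, abs_mul]
    have : |m| * |∫ u in (0:ℝ)..x, u * (1/EI u)|
        ≤ |m| * ((1/c) * L ^ 2 / ((1+1:ℕ).factorial)) :=
      mul_le_mul_of_nonneg_left h2 (abs_nonneg m)
    have hnn : (0:ℝ) ≤ R / c * L ^ 4 / ((0+4:ℕ).factorial)
        + |m| * ((1/c) * L ^ 3 / ((1+2:ℕ).factorial)) := by positivity
    linarith [h1, this]

lemma finsum_contOn {f : ℕ → ℝ → ℝ} {s : Set ℝ} (h : ∀ i, ContinuousOn (f i) s)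
    (N : Finset ℕ) : ContinuousOn (fun x => ∑ n ∈ N, f n x) s := by
  induction N using Finset.induction_on with
  | empty => simpa using continuousOn_const
  | insert _ _ hx ih =>
    simp only [Finset.sum_insert hx]
    exact (h _).add ih
lemma genH_one {L c R : ℝ} (hL : 0 < L) (hc : 0 < c) (hR : 0 ≤ R)
    {ρ EI : ℝ → ℝ} (hρc : ContinuousOn ρ (Set.Icc 0 L)) (hEIc : ContinuousOn EI (Set.Icc 0 L))
    (hEIb : ∀ x ∈ Set.Icc (0:ℝ) L, c ≤ EI x) (hρR : ∀ x ∈ Set.Icc (0:ℝ) L, |x * ρ x| ≤ R)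
    (J : ℝ) :
    ∃ (h1d : ℝ → ℝ) (K : ℝ), 0 ≤ K ∧
      ContinuousOn (genH ρ EI J 1) (Set.Icc 0 L) ∧ ContinuousOn h1d (Set.Icc 0 L) ∧
      (∀ x ∈ Set.Icc (0:ℝ) L, HasDerivWithinAt (genH ρ EI J 1) (h1d x) (Set.Icc 0 L) x) ∧
      (∀ x ∈ Set.Icc (0:ℝ) L, |genH ρ EI J 1 x| ≤ K) ∧
      (∀ x ∈ Set.Icc (0:ℝ) L, |h1d x| ≤ K) := by
  have hEIne : ∀ x ∈ Set.Icc (0:ℝ) L, EI x ≠ 0 := fun x hx => (lt_of_lt_of_le hc (hEIb x hx)).ne'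
  obtain ⟨Q', hQc, hQd, hQb, hNb⟩ := quad_layer (ρ := fun u => u * ρ u) hL hc zero_le_one hR
    (continuousOn_id.mul hρc) hEIc hEIb hρR 0
    (continuousOn_const (c := (1:ℝ))) (by intro x hx; simp)
  simp only [mul_one] at hQd hQb hNb
  have hgen1 : genH ρ EI J 1 = fun x =>
      -(∫ s₁ in (0:ℝ)..x, ∫ s₂ in (0:ℝ)..s₁, ∫ s₃ in (0:ℝ)..s₂, ∫ s₄ in (0:ℝ)..s₃,
          s₄ * ρ s₄ / EI s₂)
      + J * ∫ s₁ in (0:ℝ)..x, ∫ s₂ in (0:ℝ)..s₁, 1 / EI s₂ := rfl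
  have he₀ : ContinuousOn (fun u : ℝ => 1 / EI u) (Set.Icc 0 L) :=
    continuousOn_const.div hEIc hEIne
  have he₀b : ∀ x ∈ Set.Icc (0:ℝ) L, |1 / EI x| ≤ (1/c) * x ^ 0 / (0:ℕ).factorial := by
    intro x hx
    have hEIx : 0 < EI x := lt_of_lt_of_le hc (hEIb x hx)
    rw [abs_of_pos (one_div_pos.mpr hEIx)]
    simpa using one_div_le_one_div_of_le hc (hEIb x hx)
  obtain ⟨hdP, hbP⟩ := prim_layer hL (by positivity) 0 he₀ he₀b
  have hPc : ContinuousOn (fun y => ∫ u in (0:ℝ)..y, 1 / EI u) (Set.Icc 0 L) :=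
    fun x hx => (hdP x hx).continuousWithinAt
  obtain ⟨hdPP, hbPP⟩ := prim_layer hL (by positivity) 1 hPc hbP
  refine ⟨fun x => -(Q' x) + J * (∫ u in (0:ℝ)..x, 1 / EI u),
    R / c * L ^ 4 / ((0+4:ℕ).factorial) + |J| * ((1/c) * L ^ 2 / ((1+1:ℕ).factorial))
      + (R / c * L ^ 3 / ((0+3:ℕ).factorial) + |J| * ((1/c) * L ^ 1 / ((0+1:ℕ).factorial))),
    by positivity, ?_, ?_, ?_, ?_, ?_⟩
  · rw [hgen1]
    have hNc : ContinuousOn (fun y => ∫ s₁ in (0:ℝ)..y, ∫ s₂ in (0:ℝ)..s₁,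
        ∫ s₃ in (0:ℝ)..s₂, ∫ s₄ in (0:ℝ)..s₃, s₄ * ρ s₄ / EI s₂) (Set.Icc 0 L) :=
      fun x hx => (hQd x hx).continuousWithinAt
    exact hNc.neg.add (continuousOn_const.mul
      (fun x hx => (hdPP x hx).continuousWithinAt))
  · exact (hQc.neg).add (continuousOn_const.mul hPc)
  · intro x hx
    rw [hgen1]
    exact ((hQd x hx).neg).add ((hdPP x hx).const_mul J)
  · intro x hx
    rw [hgen1]
    have h1 : |(∫ s₁ in (0:ℝ)..x, ∫ s₂ in (0:ℝ)..s₁, ∫ s₃ in (0:ℝ)..s₂, ∫ s₄ in (0:ℝ)..s₃,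
        s₄ * ρ s₄ / EI s₂)| ≤ R / c * L ^ 4 / ((0+4:ℕ).factorial) := by
      refine (hNb x hx).trans ?_
      gcongr <;> first
        | exact hx.1
        | exact hx.2
        | positivity
    have h2 : |∫ s₁ in (0:ℝ)..x, ∫ s₂ in (0:ℝ)..s₁, 1 / EI s₂|
        ≤ (1/c) * L ^ 2 / ((1+1:ℕ).factorial) := by
      refine (hbPP x hx).trans ?_
      gcongr <;> first
        | exact hx.1
        | exact hx.2
        | positivity
    simp only
    refine (abs_add_le _ _).trans ?_
    rw [abs_neg, abs_mul]
    have h3 : |J| * |∫ s₁ in (0:ℝ)..x, ∫ s₂ in (0:ℝ)..s₁, 1 / EI s₂|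
        ≤ |J| * ((1/c) * L ^ 2 / ((1+1:ℕ).factorial)) :=
      mul_le_mul_of_nonneg_left h2 (abs_nonneg J)
    have hnn : (0:ℝ) ≤ R / c * L ^ 3 / ((0+3:ℕ).factorial)
        + |J| * ((1/c) * L ^ 1 / ((0+1:ℕ).factorial)) := by positivity
    linarith [h1, h3]
  · intro x hx
    have h1 : |Q' x| ≤ R / c * L ^ 3 / ((0+3:ℕ).factorial) := by
      refine (hQb x hx).trans ?_
      gcongr <;> first
        | exact hx.1
        | exact hx.2
        | positivity
    have h2 : |∫ u in (0:ℝ)..x, 1 / EI u| ≤ (1/c) * L ^ 1 / ((0+1:ℕ).factorial) := by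
      refine (hbP x hx).trans ?_
      gcongr <;> first
        | exact hx.1
        | exact hx.2
        | positivity
    simp only
    refine (abs_add_le _ _).trans ?_
    rw [abs_neg, abs_mul]
    have h3 : |J| * |∫ u in (0:ℝ)..x, 1 / EI u|
        ≤ |J| * ((1/c) * L ^ 1 / ((0+1:ℕ).factorial)) :=
      mul_le_mul_of_nonneg_left h2 (abs_nonneg J)
    have hnn : (0:ℝ) ≤ R / c * L ^ 4 / ((0+4:ℕ).factorial)
        + |J| * ((1/c) * L ^ 2 / ((1+1:ℕ).factorial)) := by positivity
    linarith [h1, h3]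

end Helpers

/-- if `y₁, y₂` satisfy the infinite-order differential equation
`Σ_k g_k'(L) y₁⁽²ᵏ⁾(t) + Σ_k h_k'(L) y₂⁽²ᵏ⁾(t) = 0` on `[0,T]`, then `w_x(L,t) = 0`
for all `t ∈ [0,T]`. -/
theorem stmt9 (L m J : ℝ) (hL : 0 < L) (hm : 0 < m) (hJ : 0 < J)
    (ρ EI : ℝ → ℝ)
    (hρ : ContDiffOn ℝ 4 ρ (Set.Icc 0 L)) (hEI : ContDiffOn ℝ 4 EI (Set.Icc 0 L))
    (hρpos : ∃ c > 0, ∀ x ∈ Set.Icc (0:ℝ) L, c ≤ ρ x)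
    (hEIpos : ∃ c > 0, ∀ x ∈ Set.Icc (0:ℝ) L, c ≤ EI x)
    (T s : ℝ) (hT : 0 < T) (hs₁ : 1 < s) (hs₂ : s < 2)
    (y₁ y₂ : ℝ → ℝ) (hy₁ : MemGevrey s T y₁) (hy₂ : MemGevrey s T y₂)
    (w : ℝ → ℝ → ℝ) (hw : w = wSol (genG ρ EI m) (genH ρ EI J) y₁ y₂)
    (hflat : ∀ t ∈ Set.Icc (0:ℝ) T,
      (∑' k : ℕ, derivWithin (genG ρ EI m k) (Set.Icc 0 L) L * iteratedDeriv (2 * k) y₁ t) +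
      (∑' k : ℕ, derivWithin (genH ρ EI J k) (Set.Icc 0 L) L * iteratedDeriv (2 * k) y₂ t)
        = 0) :
    ∀ t ∈ Set.Icc (0:ℝ) T,
      derivWithin (fun ξ => w ξ t) (Set.Icc 0 L) L = 0 := by
  intro t ht
  rw [hw]
  obtain ⟨cE, hcE, hEIb⟩ := hEIpos
  have hρcont : ContinuousOn ρ (Set.Icc 0 L) := hρ.continuousOn
  have hEIcont : ContinuousOn EI (Set.Icc 0 L) := hEI.continuousOn
  obtain ⟨R₀, hR₀⟩ := (isCompact_Icc (a := (0:ℝ)) (b := L)).exists_bound_of_continuousOn hρcont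
  have hρR : ∀ x ∈ Set.Icc (0:ℝ) L, |ρ x| ≤ max R₀ 0 := fun x hx =>
    le_trans (by simpa [Real.norm_eq_abs] using hR₀ x hx) (le_max_left _ _)
  set R : ℝ := max R₀ 0 with hRdef
  have hR : 0 ≤ R := le_max_right _ _
  have hρRh : ∀ x ∈ Set.Icc (0:ℝ) L, |x * ρ x| ≤ L * R := by
    intro x hx
    rw [abs_mul, abs_of_nonneg hx.1]
    exact mul_le_mul hx.2 (hρR x hx) (abs_nonneg _) hL.le
  obtain ⟨g1d, Kg, hKg, hG1c, hg1dc, hg1dd, hG1b, hg1db⟩ :=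
    genG_one hL hcE hR hρcont hEIcont hEIb hρR m
  obtain ⟨h1d, Kh, hKh, hH1c, hh1dc, hh1dd, hH1b, hh1db⟩ :=
    genH_one hL hcE (mul_nonneg hL.le hR) hρcont hEIcont hEIb hρRh J
  obtain ⟨FdG, hFdG⟩ := seq_master hL hcE hKg hR hρcont hEIcont hEIb hρR
    (F := genG ρ EI m) hG1c hG1b (fun k => rfl)
  obtain ⟨FdH, hFdH⟩ := seq_master hL hcE hKh hR hρcont hEIcont hEIb hρR
    (F := genH ρ EI J) hH1c hH1b (fun k => rfl)
  set Gd : ℕ → ℝ → ℝ := fun k => match k with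
    | 0 => fun _ => 0
    | 1 => g1d
    | (j+2) => fun x => -(FdG j x) with hGddef
  set Hd : ℕ → ℝ → ℝ := fun k => match k with
    | 0 => fun _ => 1
    | 1 => h1d
    | (j+2) => fun x => -(FdH j x) with hHddef
  have hGc : ∀ k, ContinuousOn (genG ρ EI m k) (Set.Icc 0 L) := by
    intro k
    rcases k with _ | _ | j
    · exact continuousOn_const
    · exact hG1c
    · exact (hFdG (j+1)).1
  have hHc : ∀ k, ContinuousOn (genH ρ EI J k) (Set.Icc 0 L) := by
    intro k
    rcases k with _ | _ | j
    · exact continuousOn_id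
    · exact hH1c
    · exact (hFdH (j+1)).1
  have hGdc : ∀ k, ContinuousOn (Gd k) (Set.Icc 0 L) := by
    intro k
    rcases k with _ | _ | j
    · exact continuousOn_const
    · exact hg1dc
    · exact ((hFdG j).2.1).neg
  have hHdc : ∀ k, ContinuousOn (Hd k) (Set.Icc 0 L) := by
    intro k
    rcases k with _ | _ | j
    · exact continuousOn_const
    · exact hh1dc
    · exact ((hFdH j).2.1).neg
  have hGd : ∀ k, ∀ x ∈ Set.Icc (0:ℝ) L,
      HasDerivWithinAt (genG ρ EI m k) (Gd k x) (Set.Icc 0 L) x := by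
    intro k
    rcases k with _ | _ | j
    · exact fun x _ => hasDerivWithinAt_const x _ 1
    · exact hg1dd
    · exact (hFdG j).2.2.1
  have hHd : ∀ k, ∀ x ∈ Set.Icc (0:ℝ) L,
      HasDerivWithinAt (genH ρ EI J k) (Hd k x) (Set.Icc 0 L) x := by
    intro k
    rcases k with _ | _ | j
    · exact fun x _ => hasDerivWithinAt_id x _
    · exact hh1dd
    · exact (hFdH j).2.2.1
  -- constants for the closed-form bounds
  set A : ℝ := max (R / cE) 1 with hAdef
  have hA : 1 ≤ A := le_max_right _ _
  have hA' : R / cE ≤ A := le_max_left _ _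
  have hA0 : 0 ≤ R / cE := div_nonneg hR hcE.le
  set Lm : ℝ := max L 1 with hLmdef
  have hLm : 1 ≤ Lm := le_max_right _ _
  have hLm' : L ≤ Lm := le_max_left _ _
  set QQ : ℝ := 1024 * A * Lm^4 with hQQdef
  have hLm2 : (1:ℝ) ≤ Lm^2 := by nlinarith
  have hLm4 : (1:ℝ) ≤ Lm^4 := by nlinarith
  have hQQ : (1024:ℝ) ≤ QQ := by nlinarith
  have hQQ0 : (0:ℝ) ≤ QQ := by linarith
  set E : ℝ := max (max 1 L) (max Kg Kh) with hEdef
  have hE1 : (1:ℝ) ≤ E := le_trans (le_max_left 1 L) (le_max_left _ _)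
  have hEL : L ≤ E := le_trans (le_max_right 1 L) (le_max_left _ _)
  have hEKg : Kg ≤ E := le_trans (le_max_left Kg Kh) (le_max_right _ _)
  have hEKh : Kh ≤ E := le_trans (le_max_right Kg Kh) (le_max_right _ _)
  have hE0 : (0:ℝ) ≤ E := le_trans zero_le_one hE1
  have hEQnn : ∀ k : ℕ, (0:ℝ) ≤ E * QQ^k / ((4*k).factorial : ℝ) :=
    fun k => div_nonneg (mul_nonneg hE0 (pow_nonneg hQQ0 _)) (Nat.cast_nonneg _)
  have hfact1 : ((4*1).factorial : ℝ) = 24 := by norm_num [Nat.factorial]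
  -- bound for index 1 terms
  have hone : ∀ KK : ℝ, KK ≤ E → ∀ x : ℝ, ∀ q : ℝ, |q| ≤ KK →
      |q| ≤ E * QQ^1 / ((4*1).factorial : ℝ) := by
    intro KK hKK x q hq
    rw [hfact1, pow_one]
    calc |q| ≤ KK := hq
      _ ≤ E := hKK
      _ = E * 24 / 24 := by ring
      _ ≤ E * QQ / 24 := by
          gcongr
          linarith
  have hGb : ∀ k, ∀ x ∈ Set.Icc (0:ℝ) L,
      |genG ρ EI m k x| ≤ E * QQ^k / ((4*k).factorial : ℝ) := by
    intro k
    rcases k with _ | _ | j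
    · intro x hx
      show |(1:ℝ)| ≤ _
      rw [abs_one]
      simpa using hE1
    · intro x hx
      exact hone Kg hEKg x _ (hG1b x hx)
    · intro x hx
      refine ((hFdG (j+1)).2.2.2.1 x hx).trans ?_
      have step1 : Kg * (R/cE)^(j+1) * L^(4*(j+1)) / ((4*(j+1)).factorial : ℝ)
          ≤ Kg * A^(j+1) * Lm^(4*(j+1)) / ((4*(j+1)).factorial : ℝ) := by
        gcongr <;> first
          | exact hA'
          | exact hA0
          | exact hLm'
          | exact hL.le
          | exact hKg
          | positivity
      have step2 := promote hKg hA hLm (j+2) (j+1) (4*(j+1))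
        (by omega) (by omega) (by omega) (by omega)
      rw [← hQQdef] at step2
      refine step1.trans (step2.trans ?_)
      gcongr
  have hHb : ∀ k, ∀ x ∈ Set.Icc (0:ℝ) L,
      |genH ρ EI J k x| ≤ E * QQ^k / ((4*k).factorial : ℝ) := by
    intro k
    rcases k with _ | _ | j
    · intro x hx
      show |x| ≤ _
      rw [abs_of_nonneg hx.1]
      simpa using hx.2.trans hEL
    · intro x hx
      exact hone Kh hEKh x _ (hH1b x hx)
    · intro x hx
      refine ((hFdH (j+1)).2.2.2.1 x hx).trans ?_
      have step1 : Kh * (R/cE)^(j+1) * L^(4*(j+1)) / ((4*(j+1)).factorial : ℝ)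
          ≤ Kh * A^(j+1) * Lm^(4*(j+1)) / ((4*(j+1)).factorial : ℝ) := by
        gcongr <;> first
          | exact hA'
          | exact hA0
          | exact hLm'
          | exact hL.le
          | exact hKh
          | positivity
      have step2 := promote hKh hA hLm (j+2) (j+1) (4*(j+1))
        (by omega) (by omega) (by omega) (by omega)
      rw [← hQQdef] at step2
      refine step1.trans (step2.trans ?_)
      gcongr
  have hGdb : ∀ k, ∀ x ∈ Set.Icc (0:ℝ) L,
      |Gd k x| ≤ E * QQ^k / ((4*k).factorial : ℝ) := by
    intro k
    rcases k with _ | _ | j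
    · intro x hx
      show |(0:ℝ)| ≤ _
      rw [abs_zero]
      exact hEQnn 0
    · intro x hx
      exact hone Kg hEKg x _ (hg1db x hx)
    · intro x hx
      show |(-(FdG j x))| ≤ _
      rw [abs_neg]
      have hb := (hFdG j).2.2.2.2 x hx
      have e : R/cE * (Kg * (R/cE)^j) * L^(4*j+3) / ((4*j+3).factorial:ℝ)
          = Kg * (R/cE)^(j+1) * L^(4*j+3) / ((4*j+3).factorial:ℝ) := by ring
      rw [e] at hb
      refine hb.trans ?_
      have step1 : Kg * (R/cE)^(j+1) * L^(4*j+3) / ((4*j+3).factorial : ℝ)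
          ≤ Kg * A^(j+1) * Lm^(4*j+3) / ((4*j+3).factorial : ℝ) := by
        gcongr <;> first
          | exact hA'
          | exact hA0
          | exact hLm'
          | exact hL.le
          | exact hKg
          | positivity
      have step2 := promote hKg hA hLm (j+2) (j+1) (4*j+3)
        (by omega) (by omega) (by omega) (by omega)
      rw [← hQQdef] at step2
      refine step1.trans (step2.trans ?_)
      gcongr
  have hHdb : ∀ k, ∀ x ∈ Set.Icc (0:ℝ) L,
      |Hd k x| ≤ E * QQ^k / ((4*k).factorial : ℝ) := by
    intro k
    rcases k with _ | _ | j
    · intro x hx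
      show |(1:ℝ)| ≤ _
      rw [abs_one]
      simpa using hE1
    · intro x hx
      exact hone Kh hEKh x _ (hh1db x hx)
    · intro x hx
      show |(-(FdH j x))| ≤ _
      rw [abs_neg]
      have hb := (hFdH j).2.2.2.2 x hx
      have e : R/cE * (Kh * (R/cE)^j) * L^(4*j+3) / ((4*j+3).factorial:ℝ)
          = Kh * (R/cE)^(j+1) * L^(4*j+3) / ((4*j+3).factorial:ℝ) := by ring
      rw [e] at hb
      refine hb.trans ?_
      have step1 : Kh * (R/cE)^(j+1) * L^(4*j+3) / ((4*j+3).factorial : ℝ)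
          ≤ Kh * A^(j+1) * Lm^(4*j+3) / ((4*j+3).factorial : ℝ) := by
        gcongr <;> first
          | exact hA'
          | exact hA0
          | exact hLm'
          | exact hL.le
          | exact hKh
          | positivity
      have step2 := promote hKh hA hLm (j+2) (j+1) (4*j+3)
        (by omega) (by omega) (by omega) (by omega)
      rw [← hQQdef] at step2
      refine step1.trans (step2.trans ?_)
      gcongr
  -- Gevrey data
  obtain ⟨hy₁sm, D₁, hD₁, hYb₁⟩ := hy₁
  obtain ⟨hy₂sm, D₂, hD₂, hYb₂⟩ := hy₂
  set Y₁ : ℕ → ℝ := fun k => iteratedDeriv (2*k) y₁ t with hY₁def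
  set Y₂ : ℕ → ℝ := fun k => iteratedDeriv (2*k) y₂ t with hY₂def
  have hY₁ : ∀ k, |Y₁ k| ≤ D₁^(2*k+1) * ((2*k).factorial : ℝ)^s := fun k => hYb₁ (2*k) t ht
  have hY₂ : ∀ k, |Y₂ k| ≤ D₂^(2*k+1) * ((2*k).factorial : ℝ)^s := fun k => hYb₂ (2*k) t ht
  have hs0 : (0:ℝ) ≤ s := by linarith
  have hsum1 : Summable (fun k : ℕ => QQ^k * D₁^(2*k+1) * ((2*k).factorial : ℝ)^s
      / ((4*k).factorial : ℝ)) := summable_gevrey hs0 hs₂ hQQ0 hD₁.le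
  have hsum2 : Summable (fun k : ℕ => QQ^k * D₂^(2*k+1) * ((2*k).factorial : ℝ)^s
      / ((4*k).factorial : ℝ)) := summable_gevrey hs0 hs₂ hQQ0 hD₂.le
  set u : ℕ → ℝ := fun k =>
      E * (QQ^k * D₁^(2*k+1) * ((2*k).factorial:ℝ)^s / ((4*k).factorial:ℝ))
      + E * (QQ^k * D₂^(2*k+1) * ((2*k).factorial:ℝ)^s / ((4*k).factorial:ℝ)) with hudef
  have hu : Summable u := (hsum1.mul_left E).add (hsum2.mul_left E)
  have pairbound : ∀ (p q : ℝ) (k : ℕ),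
      |p| ≤ E * QQ^k / ((4*k).factorial:ℝ) → |q| ≤ E * QQ^k / ((4*k).factorial:ℝ) →
      |p * Y₁ k + q * Y₂ k| ≤ u k := by
    intro p q k hp hq
    refine (abs_add_le _ _).trans ?_
    rw [abs_mul, abs_mul]
    have h1 : |p| * |Y₁ k| ≤ (E * QQ^k / ((4*k).factorial:ℝ))
        * (D₁^(2*k+1) * ((2*k).factorial:ℝ)^s) :=
      mul_le_mul hp (hY₁ k) (abs_nonneg _) (hEQnn k)
    have h2 : |q| * |Y₂ k| ≤ (E * QQ^k / ((4*k).factorial:ℝ))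
        * (D₂^(2*k+1) * ((2*k).factorial:ℝ)^s) :=
      mul_le_mul hq (hY₂ k) (abs_nonneg _) (hEQnn k)
    calc |p| * |Y₁ k| + |q| * |Y₂ k|
        ≤ (E * QQ^k / ((4*k).factorial:ℝ)) * (D₁^(2*k+1) * ((2*k).factorial:ℝ)^s)
          + (E * QQ^k / ((4*k).factorial:ℝ)) * (D₂^(2*k+1) * ((2*k).factorial:ℝ)^s) :=
          add_le_add h1 h2
      _ = u k := by rw [hudef]; ring
  have ha'b : ∀ k, ∀ x ∈ Set.Icc (0:ℝ) L, |Gd k x * Y₁ k + Hd k x * Y₂ k| ≤ u k :=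
    fun k x hx => pairbound _ _ k (hGdb k x hx) (hHdb k x hx)
  have hab : ∀ k, ∀ x ∈ Set.Icc (0:ℝ) L,
      |genG ρ EI m k x * Y₁ k + genH ρ EI J k x * Y₂ k| ≤ u k :=
    fun k x hx => pairbound _ _ k (hGb k x hx) (hHb k x hx)
  have hconta : ∀ k, ContinuousOn
      (fun x => genG ρ EI m k x * Y₁ k + genH ρ EI J k x * Y₂ k) (Set.Icc 0 L) :=
    fun k => ((hGc k).mul continuousOn_const).add ((hHc k).mul continuousOn_const)
  have hconta' : ∀ k, ContinuousOn
      (fun x => Gd k x * Y₁ k + Hd k x * Y₂ k) (Set.Icc 0 L) :=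
    fun k => ((hGdc k).mul continuousOn_const).add ((hHdc k).mul continuousOn_const)
  have haderiv : ∀ k, ∀ x ∈ Set.Icc (0:ℝ) L,
      HasDerivWithinAt (fun x => genG ρ EI m k x * Y₁ k + genH ρ EI J k x * Y₂ k)
        (Gd k x * Y₁ k + Hd k x * Y₂ k) (Set.Icc 0 L) x :=
    fun k x hx => ((hGd k x hx).mul_const _).add ((hHd k x hx).mul_const _)
  have hsa : ∀ x ∈ Set.Icc (0:ℝ) L,
      Summable (fun k => genG ρ EI m k x * Y₁ k + genH ρ EI J k x * Y₂ k) := by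
    intro x hx
    apply Summable.of_abs
    exact hu.of_nonneg_of_le (fun k => abs_nonneg _) (fun k => hab k x hx)
  have hsa' : ∀ x ∈ Set.Icc (0:ℝ) L,
      Summable (fun k => Gd k x * Y₁ k + Hd k x * Y₂ k) := by
    intro x hx
    apply Summable.of_abs
    exact hu.of_nonneg_of_le (fun k => abs_nonneg _) (fun k => ha'b k x hx)
  set S : ℝ → ℝ := fun x => ∑' k, (Gd k x * Y₁ k + Hd k x * Y₂ k) with hSdef
  have hSc : ContinuousOn S (Set.Icc 0 L) := by
    have hTU := tendstoUniformlyOn_tsum hu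
      (f := fun k x => Gd k x * Y₁ k + Hd k x * Y₂ k) (s := Set.Icc 0 L)
      (fun k x hx => by rw [Real.norm_eq_abs]; exact ha'b k x hx)
    exact hTU.continuousOn (Filter.Eventually.of_forall (fun N => finsum_contOn hconta' N)).frequently
  have hmemL : L ∈ Set.Icc (0:ℝ) L := ⟨hL.le, le_rfl⟩
  have hm0 : (0:ℝ) ∈ Set.Icc (0:ℝ) L := ⟨le_rfl, hL.le⟩
  have hrep : ∀ x ∈ Set.Icc (0:ℝ) L,
      (∑' k, (genG ρ EI m k x * Y₁ k + genH ρ EI J k x * Y₂ k))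
        = (∑' k, (genG ρ EI m k 0 * Y₁ k + genH ρ EI J k 0 * Y₂ k))
          + ∫ v in (0:ℝ)..x, S v := by
    intro x hx
    have hsub : Set.Icc (0:ℝ) x ⊆ Set.Icc (0:ℝ) L := Set.Icc_subset_Icc le_rfl hx.2
    have hFTC : ∀ k, (∫ v in (0:ℝ)..x, (Gd k v * Y₁ k + Hd k v * Y₂ k))
        = (genG ρ EI m k x * Y₁ k + genH ρ EI J k x * Y₂ k)
          - (genG ρ EI m k 0 * Y₁ k + genH ρ EI J k 0 * Y₂ k) := by
      intro k
      apply intervalIntegral.integral_eq_sub_of_hasDeriv_right_of_le hx.1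
        ((hconta k).mono hsub)
      · intro v hv
        have hvmem : v ∈ Set.Icc (0:ℝ) L := ⟨hv.1.le, hv.2.le.trans hx.2⟩
        apply (haderiv k v hvmem).mono_of_mem_nhdsWithin
        apply mem_nhdsWithin.2 ⟨Set.Iio L, isOpen_Iio, lt_of_lt_of_le hv.2 hx.2, ?_⟩
        rintro y ⟨hy1, hy2⟩
        exact ⟨(hv.1.trans hy2).le, le_of_lt hy1⟩
      · apply ContinuousOn.intervalIntegrable
        apply (hconta' k).mono
        rwa [Set.uIcc_of_le hx.1]
    have hHS : HasSum (fun k => ∫ v in (0:ℝ)..x, (Gd k v * Y₁ k + Hd k v * Y₂ k))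
        (∫ v in (0:ℝ)..x, S v) := by
      apply intervalIntegral.hasSum_integral_of_dominated_convergence
        (bound := fun k (_ : ℝ) => u k)
      · intro k
        apply ContinuousOn.aestronglyMeasurable _ measurableSet_uIoc
        apply (hconta' k).mono
        rw [Set.uIoc_of_le hx.1]
        exact Set.Ioc_subset_Icc_self.trans hsub
      · intro k
        apply Filter.Eventually.of_forall
        intro v hv
        rw [Set.uIoc_of_le hx.1] at hv
        rw [Real.norm_eq_abs]
        exact ha'b k v (hsub (Set.Ioc_subset_Icc_self hv))
      · exact Filter.Eventually.of_forall (fun v _ => hu)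
      · exact intervalIntegrable_const
      · apply Filter.Eventually.of_forall
        intro v hv
        rw [Set.uIoc_of_le hx.1] at hv
        exact (hsa' v (hsub (Set.Ioc_subset_Icc_self hv))).hasSum
    rw [funext hFTC] at hHS
    have heq := hHS.tsum_eq
    rw [Summable.tsum_sub (hsa x hx) (hsa 0 hm0)] at heq
    linarith [heq]
  show derivWithin
      (fun ξ => ∑' k, (genG ρ EI m k ξ * Y₁ k + genH ρ EI J k ξ * Y₂ k))
      (Set.Icc 0 L) L = 0
  have hUD : UniqueDiffWithinAt ℝ (Set.Icc (0:ℝ) L) L := uniqueDiffOn_Icc hL L hmemL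
  have hWder : HasDerivWithinAt
      (fun ξ => ∑' k, (genG ρ EI m k ξ * Y₁ k + genH ρ EI J k ξ * Y₂ k))
      (S L) (Set.Icc 0 L) L := by
    have hSint : IntervalIntegrable S MeasureTheory.volume 0 L := by
      apply ContinuousOn.intervalIntegrable
      rwa [Set.uIcc_of_le hL.le]
    haveI : Fact (L ∈ Set.Icc (0:ℝ) L) := ⟨hmemL⟩
    have hSd : HasDerivWithinAt (fun ξ => ∫ v in (0:ℝ)..ξ, S v) (S L) (Set.Icc 0 L) L :=
      intervalIntegral.integral_hasDerivWithinAt_right hSint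
        (hSc.stronglyMeasurableAtFilter_nhdsWithin measurableSet_Icc L) (hSc L hmemL)
    have hCd := hSd.const_add (∑' k, (genG ρ EI m k 0 * Y₁ k + genH ρ EI J k 0 * Y₂ k))
    apply hCd.congr
    · intro y hy
      exact hrep y hy
    · exact hrep L hmemL
  rw [hWder.derivWithin hUD]
  -- identify S L with the flatness hypothesis
  have hsum1' : Summable (fun k => Gd k L * Y₁ k) := by
    apply Summable.of_abs
    apply Summable.of_nonneg_of_le (fun k => abs_nonneg _) _ (hsum1.mul_left E)
    intro k
    rw [abs_mul]
    refine (mul_le_mul (hGdb k L hmemL) (hY₁ k) (abs_nonneg _) (hEQnn k)).trans (le_of_eq ?_)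
    ring
  have hsum2' : Summable (fun k => Hd k L * Y₂ k) := by
    apply Summable.of_abs
    apply Summable.of_nonneg_of_le (fun k => abs_nonneg _) _ (hsum2.mul_left E)
    intro k
    rw [abs_mul]
    refine (mul_le_mul (hHdb k L hmemL) (hY₂ k) (abs_nonneg _) (hEQnn k)).trans (le_of_eq ?_)
    ring
  have hSL : S L = (∑' k, Gd k L * Y₁ k) + (∑' k, Hd k L * Y₂ k) :=
    Summable.tsum_add hsum1' hsum2'
  have hGdeq : ∀ k, Gd k L = derivWithin (genG ρ EI m k) (Set.Icc 0 L) L :=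
    fun k => ((hGd k L hmemL).derivWithin hUD).symm
  have hHdeq : ∀ k, Hd k L = derivWithin (genH ρ EI J k) (Set.Icc 0 L) L :=
    fun k => ((hHd k L hmemL).derivWithin hUD).symm
  have e1 : (∑' k, Gd k L * Y₁ k)
      = ∑' k, derivWithin (genG ρ EI m k) (Set.Icc 0 L) L * Y₁ k :=
    tsum_congr (fun k => by rw [hGdeq k])
  have e2 : (∑' k, Hd k L * Y₂ k)
      = ∑' k, derivWithin (genH ρ EI J k) (Set.Icc 0 L) L * Y₂ k :=
    tsum_congr (fun k => by rw [hHdeq k])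
  rw [hSL, e1, e2]
  exact hflat t ht
end

section
/- Let T > 0, s ∈ (1,2) and p ∈ G_s[0,T]. Then for every t ∈ [0,T] the double sum Σ_{l≥0} Σ_{j+k=l} |g_j'(L) h_k'(L) p^{(2l)}(t)| is finite, where the inner sum runs over all pairs of nonnegative integers (j,k) with j + k = l. -/
open Set Filter intervalIntegral

section Aux
open MeasureTheory

noncomputable def prim (f : ℝ → ℝ) : ℝ → ℝ := fun x => ∫ t in (0:ℝ)..x, f t

/-- `f` is continuous on `[0,L]` and dominated by `C (xⁿ/n! + x^p/p!)` there. -/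
def Dom2 (L : ℝ) (n p : ℕ) (C : ℝ) (f : ℝ → ℝ) : Prop :=
  ContinuousOn f (Set.Icc 0 L) ∧ ∀ x ∈ Set.Icc (0:ℝ) L,
    |f x| ≤ C * (x ^ n / n.factorial + x ^ p / p.factorial)

lemma integral_monomial (n : ℕ) (x : ℝ) :
    ∫ t in (0:ℝ)..x, t ^ n / n.factorial = x ^ (n+1) / (n+1).factorial := by
  rw [intervalIntegral.integral_div, integral_pow]
  have h : ((n+1).factorial : ℝ) = (n+1) * n.factorial := by
    rw [Nat.factorial_succ]; push_cast; ring
  have hn : ((n:ℝ)+1) ≠ 0 := by positivity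
  have hf : (n.factorial : ℝ) ≠ 0 := by positivity
  rw [h]
  field_simp
  simp

lemma monomial_nonneg {n p : ℕ} {x : ℝ} (hx : 0 ≤ x) :
    0 ≤ x ^ n / n.factorial + x ^ p / p.factorial := by positivity

lemma Dom2.prim_step {L : ℝ} {n p : ℕ} {C : ℝ} {f : ℝ → ℝ} (hL : 0 < L)
    (h : Dom2 L n p C f) : Dom2 L (n+1) (p+1) C (prim f) := by
  obtain ⟨hcont, hbd⟩ := h
  have hIcc : Set.uIcc (0:ℝ) L = Set.Icc 0 L := Set.uIcc_of_le hL.le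
  have hint : IntegrableOn f (Set.uIcc 0 L) := by
    rw [hIcc]; exact hcont.integrableOn_compact isCompact_Icc
  constructor
  · have := intervalIntegral.continuousOn_primitive_interval (a := 0) (b := L) (f := f) hint
    rwa [hIcc] at this
  · intro x hx
    obtain ⟨hx0, hxL⟩ := hx
    have hsub : Set.uIcc (0:ℝ) x ⊆ Set.Icc 0 L := by
      rw [Set.uIcc_of_le hx0]; exact Set.Icc_subset_Icc le_rfl hxL
    have hfi : IntervalIntegrable f MeasureTheory.volume 0 x :=
      (hcont.mono hsub).intervalIntegrable
    have hgi : IntervalIntegrable (fun t => C * (t ^ n / n.factorial + t ^ p / p.factorial))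
        MeasureTheory.volume 0 x := (by continuity : Continuous fun t : ℝ =>
          C * (t ^ n / n.factorial + t ^ p / p.factorial)).intervalIntegrable 0 x
    calc |prim f x| ≤ ∫ t in (0:ℝ)..x, |f t| :=
          intervalIntegral.abs_integral_le_integral_abs hx0
      _ ≤ ∫ t in (0:ℝ)..x, C * (t ^ n / n.factorial + t ^ p / p.factorial) := by
          refine intervalIntegral.integral_mono_on hx0 hfi.abs hgi ?_
          intro t ht
          exact hbd t ⟨ht.1, ht.2.trans hxL⟩
      _ = C * (x ^ (n+1) / (n+1).factorial + x ^ (p+1) / (p+1).factorial) := by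
          rw [intervalIntegral.integral_const_mul]
          congr 1
          rw [intervalIntegral.integral_add
            ((by continuity : Continuous fun t : ℝ => t ^ n / n.factorial).intervalIntegrable 0 x)
            ((by continuity : Continuous fun t : ℝ => t ^ p / p.factorial).intervalIntegrable 0 x),
            integral_monomial, integral_monomial]

variable {L cE Mρ m J : ℝ} {ρ EI : ℝ → ℝ}

lemma Dom2.divEI (hEIc : ContinuousOn EI (Set.Icc 0 L)) (hcE : 0 < cE)
    (hEIlb : ∀ x ∈ Set.Icc (0:ℝ) L, cE ≤ EI x)
    {n p : ℕ} {C : ℝ} {f : ℝ → ℝ} (h : Dom2 L n p C f) :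
    Dom2 L n p (C / cE) (fun x => f x / EI x) := by
  obtain ⟨hcont, hbd⟩ := h
  have hne : ∀ x ∈ Set.Icc (0:ℝ) L, EI x ≠ 0 := fun x hx => (hcE.trans_le (hEIlb x hx)).ne'
  refine ⟨hcont.div hEIc hne, fun x hx => ?_⟩
  have hEx := hEIlb x hx
  have hfx := hbd x hx
  have hCnn : 0 ≤ C * (x ^ n / n.factorial + x ^ p / p.factorial) := (abs_nonneg _).trans hfx
  rw [abs_div, abs_of_pos (hcE.trans_le hEx)]
  calc |f x| / EI x ≤ (C * (x ^ n / n.factorial + x ^ p / p.factorial)) / cE :=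
        div_le_div₀ hCnn hfx hcE hEx
    _ = C / cE * (x ^ n / n.factorial + x ^ p / p.factorial) := by ring

lemma Dom2.rhoMul (hρc : ContinuousOn ρ (Set.Icc 0 L))
    (hMρ : ∀ x ∈ Set.Icc (0:ℝ) L, |ρ x| ≤ Mρ)
    {n p : ℕ} {C : ℝ} {f : ℝ → ℝ} (h : Dom2 L n p C f) :
    Dom2 L n p (Mρ * C) (fun x => ρ x * f x) := by
  obtain ⟨hcont, hbd⟩ := h
  refine ⟨hρc.mul hcont, fun x hx => ?_⟩
  have h1 := hMρ x hx
  have h2 := hbd x hx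
  calc |ρ x * f x| = |ρ x| * |f x| := abs_mul _ _
    _ ≤ Mρ * (C * (x ^ n / n.factorial + x ^ p / p.factorial)) :=
        mul_le_mul h1 h2 (abs_nonneg _) ((abs_nonneg _).trans h1)
    _ = Mρ * C * (x ^ n / n.factorial + x ^ p / p.factorial) := by ring

/-- The quadruple integral operator appearing in the recursions. -/
noncomputable def quadT (EI g : ℝ → ℝ) : ℝ → ℝ := fun x =>
  ∫ s₁ in (0:ℝ)..x, ∫ s₂ in (0:ℝ)..s₁, ∫ s₃ in (0:ℝ)..s₂, ∫ s₄ in (0:ℝ)..s₃, g s₄ / EI s₂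

lemma quadT_eq (EI g : ℝ → ℝ) :
    quadT EI g = prim (prim (fun s₂ => prim (prim g) s₂ / EI s₂)) := by
  funext x
  simp only [quadT, prim, intervalIntegral.integral_div]

lemma Dom2.quadT_step (hL : 0 < L) (hEIc : ContinuousOn EI (Set.Icc 0 L)) (hcE : 0 < cE)
    (hEIlb : ∀ x ∈ Set.Icc (0:ℝ) L, cE ≤ EI x)
    {n p : ℕ} {C : ℝ} {g : ℝ → ℝ} (h : Dom2 L n p C g) :
    Dom2 L (n+4) (p+4) (C / cE) (quadT EI g) := by
  rw [quadT_eq]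
  exact ((((h.prim_step hL).prim_step hL).divEI hEIc hcE hEIlb).prim_step hL).prim_step hL

lemma Dom2.neg {n p : ℕ} {C : ℝ} {f : ℝ → ℝ} (h : Dom2 L n p C f) :
    Dom2 L n p C (fun x => -(f x)) :=
  ⟨h.1.neg, fun x hx => by rw [abs_neg]; exact h.2 x hx⟩

lemma dom_rho (hρc : ContinuousOn ρ (Set.Icc 0 L))
    (hMρ : ∀ x ∈ Set.Icc (0:ℝ) L, |ρ x| ≤ Mρ) : Dom2 L 0 0 (Mρ/2) ρ := by
  refine ⟨hρc, fun x hx => ?_⟩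
  have := hMρ x hx
  simp [Nat.factorial]
  linarith

lemma dom_id : Dom2 L 1 1 (1/2) (fun x => x) := by
  refine ⟨continuous_id.continuousOn, fun x hx => ?_⟩
  rw [abs_of_nonneg hx.1]
  simp [Nat.factorial]
  linarith [hx.1]

lemma dom_one : Dom2 L 0 0 (1/2) (fun _ => 1) := by
  refine ⟨continuous_const.continuousOn, fun x hx => ?_⟩
  norm_num [Nat.factorial]

lemma dom_idrho (hρc : ContinuousOn ρ (Set.Icc 0 L))
    (hMρ : ∀ x ∈ Set.Icc (0:ℝ) L, |ρ x| ≤ Mρ) : Dom2 L 1 1 (Mρ/2) (fun x => x * ρ x) := by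
  refine ⟨continuous_id.continuousOn.mul hρc, fun x hx => ?_⟩
  have h1 := hMρ x hx
  have h2 : |x * ρ x| = x * |ρ x| := by rw [abs_mul, abs_of_nonneg hx.1]
  rw [h2]
  have : x * |ρ x| ≤ x * Mρ := mul_le_mul_of_nonneg_left h1 hx.1
  simp [Nat.factorial]
  nlinarith [hx.1, abs_nonneg (ρ x)]

lemma hasDerivWithinAt_prim (hL : 0 < L) {f : ℝ → ℝ}
    (hf : ContinuousOn f (Set.Icc 0 L)) :
    HasDerivWithinAt (prim f) (f L) (Set.Icc 0 L) L := by
  have hmem : Set.Icc (0:ℝ) L ∈ nhdsWithin L (Set.Iic L) := by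
    refine mem_nhdsWithin.mpr ⟨Set.Ioi 0, isOpen_Ioi, hL, ?_⟩
    rintro y ⟨hy1, hy2⟩
    exact ⟨le_of_lt hy1, hy2⟩
  have hint : IntervalIntegrable f MeasureTheory.volume 0 L := by
    apply ContinuousOn.intervalIntegrable
    rwa [Set.uIcc_of_le hL.le]
  have hmeas : StronglyMeasurableAtFilter f (nhdsWithin L (Set.Iic L)) MeasureTheory.volume :=
    ⟨Set.Icc 0 L, hmem, hf.aestronglyMeasurable measurableSet_Icc⟩
  have hcw : ContinuousWithinAt f (Set.Iic L) L :=
    (hf L ⟨hL.le, le_rfl⟩).mono_of_mem_nhdsWithin hmem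
  have h := intervalIntegral.integral_hasDerivWithinAt_right (a := 0) (s := Set.Iic L)
    (t := Set.Iic L) hint hmeas hcw
  exact h.mono Set.Icc_subset_Iic_self

end Aux

section GenDom
open MeasureTheory
variable {L cE Mρ m J : ℝ} {ρ EI : ℝ → ℝ}

lemma genG_succ_eq (ρ EI : ℝ → ℝ) (m : ℝ) (k : ℕ) :
    genG ρ EI m (k+2) = fun x => -(quadT EI (fun s => ρ s * genG ρ EI m (k+1) s) x) := rfl

lemma genH_succ_eq (ρ EI : ℝ → ℝ) (J : ℝ) (k : ℕ) :
    genH ρ EI J (k+2) = fun x => -(quadT EI (fun s => ρ s * genH ρ EI J (k+1) s) x) := rfl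

lemma genG_one_eq (ρ EI : ℝ → ℝ) (m : ℝ) :
    genG ρ EI m 1 = fun x => -(quadT EI ρ x)
      - m * prim (prim (fun x => x / EI x)) x := by
  funext x
  simp only [genG, quadT, prim, intervalIntegral.integral_const, smul_eq_mul, sub_zero,
    mul_one_div]

lemma genH_one_eq (ρ EI : ℝ → ℝ) (J : ℝ) :
    genH ρ EI J 1 = fun x => -(quadT EI (fun s => s * ρ s) x)
      + J * prim (prim (fun x => 1 / EI x)) x := rfl

variable (hL : 0 < L) (hEIc : ContinuousOn EI (Set.Icc 0 L)) (hcE : 0 < cE)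
  (hEIlb : ∀ x ∈ Set.Icc (0:ℝ) L, cE ≤ EI x) (hρc : ContinuousOn ρ (Set.Icc 0 L))
  (hMρ : ∀ x ∈ Set.Icc (0:ℝ) L, |ρ x| ≤ Mρ)
include hL hEIc hcE hEIlb hρc hMρ

lemma genG_one_dom (hMρ0 : 0 ≤ Mρ) (hm : 0 ≤ m) :
    Dom2 L 3 4 ((Mρ + m)/cE) (genG ρ EI m 1) := by
  have dA : Dom2 L 4 4 ((Mρ/2)/cE) (quadT EI ρ) :=
    (dom_rho hρc hMρ).quadT_step hL hEIc hcE hEIlb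
  have dq : Dom2 L 1 1 ((1/2)/cE) (fun x => x / EI x) := dom_id.divEI hEIc hcE hEIlb
  have dB : Dom2 L 3 3 ((1/2)/cE) (prim (prim fun x => x / EI x)) :=
    (dq.prim_step hL).prim_step hL
  rw [genG_one_eq]
  constructor
  · exact (dA.1.neg).sub (continuousOn_const.mul dB.1)
  · intro x hx
    beta_reduce
    have h1 := dA.2 x hx
    have h2 := dB.2 x hx
    have h2' : m * |prim (prim fun x => x / EI x) x|
        ≤ m * ((1/2)/cE * (x^3/(3).factorial + x^3/(3).factorial)) :=
      mul_le_mul_of_nonneg_left h2 hm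
    have htri : |(-(quadT EI ρ x)) - m * prim (prim fun x => x / EI x) x| ≤
        |quadT EI ρ x| + m * |prim (prim fun x => x / EI x) x| := by
      refine (abs_sub _ _).trans ?_
      rw [abs_neg, abs_mul, abs_of_nonneg hm]
    have hu : (0:ℝ) ≤ x^3/(3).factorial := div_nonneg (pow_nonneg hx.1 3) (by positivity)
    have hv : (0:ℝ) ≤ x^4/(4).factorial := by positivity
    have ha : (0:ℝ) ≤ Mρ/cE := by positivity
    have hb : (0:ℝ) ≤ m/cE := by positivity
    have key : Mρ/cE * (x^4/(4).factorial) + m/cE * (x^3/(3).factorial)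
        ≤ (Mρ + m)/cE * (x^3/(3).factorial + x^4/(4).factorial) := by
      rw [add_div]
      nlinarith [mul_nonneg ha hu, mul_nonneg hb hv]
    refine htri.trans ((add_le_add h1 h2').trans ?_)
    refine le_trans (le_of_eq (by ring)) key

lemma genH_one_dom (hMρ0 : 0 ≤ Mρ) (hJ : 0 ≤ J) :
    Dom2 L 2 5 ((Mρ + J)/cE) (genH ρ EI J 1) := by
  have dA : Dom2 L 5 5 ((Mρ/2)/cE) (quadT EI (fun s => s * ρ s)) :=
    (dom_idrho hρc hMρ).quadT_step hL hEIc hcE hEIlb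
  have dq : Dom2 L 0 0 ((1/2)/cE) (fun x => 1 / EI x) := dom_one.divEI hEIc hcE hEIlb
  have dB : Dom2 L 2 2 ((1/2)/cE) (prim (prim fun x => 1 / EI x)) :=
    (dq.prim_step hL).prim_step hL
  rw [genH_one_eq]
  constructor
  · exact (dA.1.neg).add (continuousOn_const.mul dB.1)
  · intro x hx
    beta_reduce
    have h1 := dA.2 x hx
    have h2 := dB.2 x hx
    have h2' : J * |prim (prim fun x => 1 / EI x) x|
        ≤ J * ((1/2)/cE * (x^2/(2).factorial + x^2/(2).factorial)) :=
      mul_le_mul_of_nonneg_left h2 hJ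
    have htri : |(-(quadT EI (fun s => s * ρ s) x)) + J * prim (prim fun x => 1 / EI x) x| ≤
        |quadT EI (fun s => s * ρ s) x| + J * |prim (prim fun x => 1 / EI x) x| := by
      refine (abs_add_le _ _).trans ?_
      rw [abs_neg, abs_mul, abs_of_nonneg hJ]
    have hu : (0:ℝ) ≤ x^2/(2).factorial := by positivity
    have hv : (0:ℝ) ≤ x^5/(5).factorial := div_nonneg (pow_nonneg hx.1 5) (by positivity)
    have ha : (0:ℝ) ≤ Mρ/cE := by positivity
    have hb : (0:ℝ) ≤ J/cE := by positivity
    have key : Mρ/cE * (x^5/(5).factorial) + J/cE * (x^2/(2).factorial)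
        ≤ (Mρ + J)/cE * (x^2/(2).factorial + x^5/(5).factorial) := by
      rw [add_div]
      nlinarith [mul_nonneg ha hu, mul_nonneg hb hv]
    refine htri.trans ((add_le_add h1 h2').trans ?_)
    refine le_trans (le_of_eq (by ring)) key

lemma genG_dom (hMρ0 : 0 ≤ Mρ) (hm : 0 ≤ m) (k : ℕ) :
    Dom2 L (4*k+3) (4*k+4) ((Mρ + m)/cE * (Mρ/cE)^k) (genG ρ EI m (k+1)) := by
  induction k with
  | zero => simpa using genG_one_dom hL hEIc hcE hEIlb hρc hMρ hMρ0 hm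
  | succ k ih =>
    have h2 := (((ih.rhoMul hρc hMρ).quadT_step hL hEIc hcE hEIlb)).neg
    have en : 4*(k+1)+3 = 4*k+3+4 := by omega
    have ep : 4*(k+1)+4 = 4*k+4+4 := by omega
    have ec : (Mρ + m)/cE * (Mρ/cE)^(k+1) = Mρ * ((Mρ + m)/cE * (Mρ/cE)^k) / cE := by
      ring
    rw [show k+1+1 = k+2 from rfl, genG_succ_eq, en, ep, ec]
    exact h2

lemma genH_dom (hMρ0 : 0 ≤ Mρ) (hJ : 0 ≤ J) (k : ℕ) :
    Dom2 L (4*k+2) (4*k+5) ((Mρ + J)/cE * (Mρ/cE)^k) (genH ρ EI J (k+1)) := by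
  induction k with
  | zero => simpa using genH_one_dom hL hEIc hcE hEIlb hρc hMρ hMρ0 hJ
  | succ k ih =>
    have h2 := (((ih.rhoMul hρc hMρ).quadT_step hL hEIc hcE hEIlb)).neg
    have en : 4*(k+1)+2 = 4*k+2+4 := by omega
    have ep : 4*(k+1)+5 = 4*k+5+4 := by omega
    have ec : (Mρ + J)/cE * (Mρ/cE)^(k+1) = Mρ * ((Mρ + J)/cE * (Mρ/cE)^k) / cE := by
      ring
    rw [show k+1+1 = k+2 from rfl, genH_succ_eq, en, ep, ec]
    exact h2

end GenDom

section Facts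

lemma fact_add_le_pow (n r : ℕ) : (n+r).factorial ≤ (n+r)^r * n.factorial := by
  induction r with
  | zero => simp
  | succ r ih =>
    have h1 : (n + (r+1)).factorial = (n+r+1) * (n+r).factorial := by
      rw [show n+(r+1) = (n+r)+1 by omega, Nat.factorial_succ]
    rw [h1]
    calc (n+r+1) * (n+r).factorial ≤ (n+r+1) * ((n+r)^r * n.factorial) :=
          Nat.mul_le_mul_left _ ih
      _ ≤ (n+r+1) * ((n+r+1)^r * n.factorial) := by
          exact Nat.mul_le_mul_left _ (Nat.mul_le_mul_right _ (Nat.pow_le_pow_left (by omega) r))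
      _ = (n+(r+1))^(r+1) * n.factorial := by
          rw [show n+(r+1) = n+r+1 by omega, pow_succ]; ring

lemma fact_add_le_two_pow (a b : ℕ) :
    (a+b).factorial ≤ 2^(a+b) * (a.factorial * b.factorial) := by
  have h := Nat.choose_mul_factorial_mul_factorial (Nat.le_add_right a b)
  rw [Nat.add_sub_cancel_left] at h
  have hc : (a+b).choose a ≤ 2^(a+b) := by
    calc (a+b).choose a ≤ ∑ i ∈ Finset.range (a+b+1), (a+b).choose i :=
          Finset.single_le_sum (fun i _ => Nat.zero_le _) (Finset.mem_range.mpr (by omega))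
      _ = 2^(a+b) := Nat.sum_range_choose (a+b)
  calc (a+b).factorial = (a+b).choose a * a.factorial * b.factorial := h.symm
    _ ≤ 2^(a+b) * a.factorial * b.factorial :=
        Nat.mul_le_mul_right _ (Nat.mul_le_mul_right _ hc)
    _ = 2^(a+b) * (a.factorial * b.factorial) := by ring

lemma sq_fact_le (l : ℕ) : (2*l).factorial * (2*l).factorial ≤ (4*l).factorial := by
  have h := Nat.factorial_mul_factorial_dvd_factorial_add (2*l) (2*l)
  rw [show 2*l+2*l = 4*l by omega] at h
  exact Nat.le_of_dvd (Nat.factorial_pos _) h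

/-- monomial comparison with factorial slack `r`. -/
lemma mono_gen (n r : ℕ) {x M : ℝ} (hx : 0 ≤ x) (hxM : x ≤ M) (h1 : 1 ≤ M) :
    x^n / (n.factorial : ℝ) ≤ M^(n+r) * ((n+r : ℕ) : ℝ)^r / ((n+r).factorial : ℝ) := by
  rw [div_le_div_iff₀ (by positivity) (by positivity)]
  have hf : ((n+r).factorial : ℝ) ≤ ((n+r : ℕ) : ℝ)^r * (n.factorial : ℝ) := by
    exact_mod_cast fact_add_le_pow n r
  have hxn : x^n ≤ M^(n+r) := by
    calc x^n ≤ M^n := pow_le_pow_left₀ hx hxM n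
      _ ≤ M^(n+r) := pow_le_pow_right₀ h1 (Nat.le_add_right n r)
  calc x^n * ((n+r).factorial : ℝ) ≤ M^(n+r) * (((n+r : ℕ) : ℝ)^r * (n.factorial : ℝ)) :=
        mul_le_mul hxn hf (by positivity) (by positivity)
    _ = M^(n+r) * ((n+r : ℕ) : ℝ)^r * (n.factorial : ℝ) := by ring

end Facts

section Deriv
open MeasureTheory
variable {L cE Mρ m J : ℝ} {ρ EI : ℝ → ℝ}
variable (hL : 0 < L) (hEIc : ContinuousOn EI (Set.Icc 0 L)) (hcE : 0 < cE)
  (hEIlb : ∀ x ∈ Set.Icc (0:ℝ) L, cE ≤ EI x) (hρc : ContinuousOn ρ (Set.Icc 0 L))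
  (hMρ : ∀ x ∈ Set.Icc (0:ℝ) L, |ρ x| ≤ Mρ)
include hL hEIc hcE hEIlb hρc hMρ

lemma genG_deriv_succ (hMρ0 : 0 ≤ Mρ) (hm : 0 ≤ m) (k : ℕ) :
    |derivWithin (genG ρ EI m (k+2)) (Set.Icc 0 L) L| ≤
      (Mρ + m)/cE * (Mρ/cE)^(k+1) *
        (L^(4*k+6)/((4*k+6).factorial : ℝ) + L^(4*k+7)/((4*k+7).factorial : ℝ)) := by
  have dG := genG_dom hL hEIc hcE hEIlb hρc hMρ hMρ0 hm k
  have dgg := dG.rhoMul hρc hMρ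
  have dW := (((dgg.prim_step hL).prim_step hL).divEI hEIc hcE hEIlb).prim_step hL
  have hEq : genG ρ EI m (k+2) = fun x =>
      -(prim (prim (fun s₂ => prim (prim (fun s => ρ s * genG ρ EI m (k+1) s)) s₂ / EI s₂)) x) := by
    rw [genG_succ_eq, quadT_eq]
  have hder : HasDerivWithinAt (genG ρ EI m (k+2))
      (-(prim (fun s₂ => prim (prim (fun s => ρ s * genG ρ EI m (k+1) s)) s₂ / EI s₂) L))
      (Set.Icc 0 L) L := by
    rw [hEq]
    exact (hasDerivWithinAt_prim hL dW.1).neg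
  have hud : UniqueDiffWithinAt ℝ (Set.Icc (0:ℝ) L) L := (uniqueDiffOn_Icc hL) L ⟨hL.le, le_rfl⟩
  rw [hder.derivWithin hud, abs_neg]
  have hb := dW.2 L ⟨hL.le, le_rfl⟩
  have e1 : 4*k+3+1+1+1 = 4*k+6 := by omega
  have e2 : 4*k+4+1+1+1 = 4*k+7 := by omega
  rw [e1, e2] at hb
  refine hb.trans (le_of_eq ?_)
  ring

lemma genH_deriv_succ (hMρ0 : 0 ≤ Mρ) (hJ : 0 ≤ J) (k : ℕ) :
    |derivWithin (genH ρ EI J (k+2)) (Set.Icc 0 L) L| ≤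
      (Mρ + J)/cE * (Mρ/cE)^(k+1) *
        (L^(4*k+5)/((4*k+5).factorial : ℝ) + L^(4*k+8)/((4*k+8).factorial : ℝ)) := by
  have dG := genH_dom hL hEIc hcE hEIlb hρc hMρ hMρ0 hJ k
  have dgg := dG.rhoMul hρc hMρ
  have dW := (((dgg.prim_step hL).prim_step hL).divEI hEIc hcE hEIlb).prim_step hL
  have hEq : genH ρ EI J (k+2) = fun x =>
      -(prim (prim (fun s₂ => prim (prim (fun s => ρ s * genH ρ EI J (k+1) s)) s₂ / EI s₂)) x) := by
    rw [genH_succ_eq, quadT_eq]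
  have hder : HasDerivWithinAt (genH ρ EI J (k+2))
      (-(prim (fun s₂ => prim (prim (fun s => ρ s * genH ρ EI J (k+1) s)) s₂ / EI s₂) L))
      (Set.Icc 0 L) L := by
    rw [hEq]
    exact (hasDerivWithinAt_prim hL dW.1).neg
  have hud : UniqueDiffWithinAt ℝ (Set.Icc (0:ℝ) L) L := (uniqueDiffOn_Icc hL) L ⟨hL.le, le_rfl⟩
  rw [hder.derivWithin hud, abs_neg]
  have hb := dW.2 L ⟨hL.le, le_rfl⟩
  have e1 : 4*k+2+1+1+1 = 4*k+5 := by omega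
  have e2 : 4*k+5+1+1+1 = 4*k+8 := by omega
  rw [e1, e2] at hb
  refine hb.trans (le_of_eq ?_)
  ring

end Deriv

/-- Packaging of derivative bounds into a single geometric/factorial estimate. -/
lemma deriv_all_package {L Cb Rq : ℝ} {φ : ℕ → ℝ} (hL : 0 < L) (hCb : 0 ≤ Cb) (hRq : 0 ≤ Rq)
    (hφ : ∀ j, 0 ≤ φ j)
    (hsucc : ∀ k : ℕ, φ (k+2) ≤
      2 * Cb * Rq^(k+1) * (max 1 L)^(4*(k+2)) * ((4*k+8 : ℕ):ℝ)^3 / ((4*k+8).factorial : ℝ)) :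
    ∃ K : ℝ, 1 ≤ K ∧ ∀ j : ℕ,
      φ j ≤ K^(j+1) * ((4*j+4 : ℕ):ℝ)^4 / ((4*j).factorial : ℝ) := by
  set Mx := max 1 L with hMxdef
  have hMx1 : (1:ℝ) ≤ Mx := le_max_left 1 L
  set a := max 1 (2*Cb) with hadef
  set b := max 1 Rq with hbdef
  have ha1 : (1:ℝ) ≤ a := le_max_left _ _
  have hb1 : (1:ℝ) ≤ b := le_max_left _ _
  have hc1 : (1:ℝ) ≤ Mx^4 := one_le_pow₀ hMx1
  set K := max (φ 0 + φ 1 + 1) (a*b*Mx^4) with hKdef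
  have hK1 : (1:ℝ) ≤ K := by
    refine le_trans ?_ (le_max_left _ _)
    have := hφ 0; have := hφ 1
    linarith
  have hK0 : (0:ℝ) < K := lt_of_lt_of_le one_pos hK1
  refine ⟨K, hK1, ?_⟩
  intro j
  match j with
  | 0 =>
    have h0 : φ 0 ≤ K := by
      refine le_trans ?_ (le_max_left _ _)
      have := hφ 1; linarith
    have e : K^(0+1) * ((4*0+4 : ℕ):ℝ)^4 / ((4*0).factorial : ℝ) = K*256 := by
      norm_num [Nat.factorial]
    rw [e]
    nlinarith
  | 1 =>
    have h1 : φ 1 ≤ K := by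
      refine le_trans ?_ (le_max_left _ _)
      have := hφ 0; linarith
    have e : K^(1+1) * ((4*1+4 : ℕ):ℝ)^4 / ((4*1).factorial : ℝ) = K^2*4096/24 := by
      norm_num [Nat.factorial]
    rw [e]
    nlinarith [mul_nonneg (sub_nonneg.mpr hK1) hK0.le]
  | (k+2) =>
    have hb2 := hsucc k
    have e1 : 4*(k+2) = 4*k+8 := by omega
    have e2 : 4*(k+2)+4 = 4*k+12 := by omega
    rw [e2, e1]
    set X := ((4*k+8 : ℕ):ℝ) with hXdef
    set Y := ((4*k+12 : ℕ):ℝ) with hYdef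
    have hX1 : (1:ℝ) ≤ X := by rw [hXdef]; exact_mod_cast Nat.one_le_iff_ne_zero.mpr (by omega)
    have hXY : X ≤ Y := by rw [hXdef, hYdef]; exact_mod_cast (by omega : 4*k+8 ≤ 4*k+12)
    have hY1 : (1:ℝ) ≤ Y := hX1.trans hXY
    have hnum : 2 * Cb * Rq^(k+1) * Mx^(4*(k+2)) * X^3 ≤ K^(k+3) * Y^4 := by
      have s1 : 2 * Cb * Rq^(k+1) * Mx^(4*(k+2)) ≤ K^(k+3) := by
        have t1 : 2*Cb ≤ a := le_max_right _ _
        have t2 : Rq^(k+1) ≤ b^(k+1) := pow_le_pow_left₀ hRq (le_max_right _ _) _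
        have t3 : Mx^(4*(k+2)) = (Mx^4)^(k+2) := by rw [← pow_mul]
        calc 2 * Cb * Rq^(k+1) * Mx^(4*(k+2)) ≤ a * b^(k+1) * (Mx^4)^(k+2) := by
              rw [t3]
              have h2Cb : (0:ℝ) ≤ 2*Cb := by linarith
              exact mul_le_mul (mul_le_mul t1 t2 (by positivity) (by linarith))
                le_rfl (by positivity) (by positivity)
          _ ≤ a^(k+2) * b^(k+2) * (Mx^4)^(k+2) := by
              have u1 : a ≤ a^(k+2) := le_self_pow₀ (by linarith) (by omega)
              have u2 : b^(k+1) ≤ b^(k+2) := pow_le_pow_right₀ hb1 (by omega)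
              exact mul_le_mul (mul_le_mul u1 u2 (by positivity) (by positivity))
                le_rfl (by positivity) (by positivity)
          _ = (a*b*Mx^4)^(k+2) := by rw [mul_pow, mul_pow]
          _ ≤ K^(k+2) := pow_le_pow_left₀ (by positivity) (le_max_right _ _) _
          _ ≤ K^(k+3) := pow_le_pow_right₀ hK1 (by omega)
      have s2 : X^3 ≤ Y^4 := by
        calc X^3 ≤ Y^3 := pow_le_pow_left₀ (by linarith) hXY _
          _ ≤ Y^4 := pow_le_pow_right₀ hY1 (by omega)
      exact mul_le_mul s1 s2 (by positivity) (by positivity)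
    refine hb2.trans ?_
    rw [show k+2+1 = k+3 from rfl]
    gcongr

section DerivAll
variable {L cE Mρ m J : ℝ} {ρ EI : ℝ → ℝ}
variable (hL : 0 < L) (hEIc : ContinuousOn EI (Set.Icc 0 L)) (hcE : 0 < cE)
  (hEIlb : ∀ x ∈ Set.Icc (0:ℝ) L, cE ≤ EI x) (hρc : ContinuousOn ρ (Set.Icc 0 L))
  (hMρ : ∀ x ∈ Set.Icc (0:ℝ) L, |ρ x| ≤ Mρ)
include hL hEIc hcE hEIlb hρc hMρ

lemma genG_deriv_all (hMρ0 : 0 ≤ Mρ) (hm : 0 ≤ m) :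
    ∃ K : ℝ, 1 ≤ K ∧ ∀ j : ℕ,
      |derivWithin (genG ρ EI m j) (Set.Icc 0 L) L| ≤
        K^(j+1) * ((4*j+4 : ℕ):ℝ)^4 / ((4*j).factorial : ℝ) := by
  have hCb : (0:ℝ) ≤ (Mρ + m)/cE := div_nonneg (by linarith) hcE.le
  have hRq : (0:ℝ) ≤ Mρ/cE := div_nonneg hMρ0 hcE.le
  refine deriv_all_package hL hCb hRq (fun j => abs_nonneg _) ?_
  intro k
  refine (genG_deriv_succ hL hEIc hcE hEIlb hρc hMρ hMρ0 hm k).trans ?_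
  have hX1 : (1:ℝ) ≤ ((4*k+8 : ℕ):ℝ) := by exact_mod_cast Nat.one_le_iff_ne_zero.mpr (by omega)
  have m1 : L^(4*k+6)/((4*k+6).factorial : ℝ) ≤
      (max 1 L)^(4*k+8) * ((4*k+8 : ℕ):ℝ)^3 / ((4*k+8).factorial : ℝ) := by
    have h := mono_gen (4*k+6) 2 hL.le (le_max_right 1 L) (le_max_left 1 L)
    rw [show 4*k+6+2 = 4*k+8 by omega] at h
    refine h.trans ?_
    gcongr
    · omega
  have m2 : L^(4*k+7)/((4*k+7).factorial : ℝ) ≤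
      (max 1 L)^(4*k+8) * ((4*k+8 : ℕ):ℝ)^3 / ((4*k+8).factorial : ℝ) := by
    have h := mono_gen (4*k+7) 1 hL.le (le_max_right 1 L) (le_max_left 1 L)
    rw [show 4*k+7+1 = 4*k+8 by omega] at h
    refine h.trans ?_
    gcongr
    · omega
  have hpos : (0:ℝ) ≤ (Mρ + m)/cE * (Mρ/cE)^(k+1) := mul_nonneg hCb (pow_nonneg hRq _)
  calc (Mρ + m)/cE * (Mρ/cE)^(k+1) *
        (L^(4*k+6)/((4*k+6).factorial : ℝ) + L^(4*k+7)/((4*k+7).factorial : ℝ))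
      ≤ (Mρ + m)/cE * (Mρ/cE)^(k+1) *
        ((max 1 L)^(4*k+8) * ((4*k+8 : ℕ):ℝ)^3 / ((4*k+8).factorial : ℝ)
          + (max 1 L)^(4*k+8) * ((4*k+8 : ℕ):ℝ)^3 / ((4*k+8).factorial : ℝ)) :=
        mul_le_mul_of_nonneg_left (add_le_add m1 m2) hpos
    _ = 2 * ((Mρ + m)/cE) * (Mρ/cE)^(k+1) * (max 1 L)^(4*(k+2)) * ((4*k+8 : ℕ):ℝ)^3
          / ((4*k+8).factorial : ℝ) := by
        rw [show 4*(k+2) = 4*k+8 by omega]; ring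

lemma genH_deriv_all (hMρ0 : 0 ≤ Mρ) (hJ : 0 ≤ J) :
    ∃ K : ℝ, 1 ≤ K ∧ ∀ j : ℕ,
      |derivWithin (genH ρ EI J j) (Set.Icc 0 L) L| ≤
        K^(j+1) * ((4*j+4 : ℕ):ℝ)^4 / ((4*j).factorial : ℝ) := by
  have hCb : (0:ℝ) ≤ (Mρ + J)/cE := div_nonneg (by linarith) hcE.le
  have hRq : (0:ℝ) ≤ Mρ/cE := div_nonneg hMρ0 hcE.le
  refine deriv_all_package hL hCb hRq (fun j => abs_nonneg _) ?_
  intro k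
  refine (genH_deriv_succ hL hEIc hcE hEIlb hρc hMρ hMρ0 hJ k).trans ?_
  have hX1 : (1:ℝ) ≤ ((4*k+8 : ℕ):ℝ) := by exact_mod_cast Nat.one_le_iff_ne_zero.mpr (by omega)
  have m1 : L^(4*k+5)/((4*k+5).factorial : ℝ) ≤
      (max 1 L)^(4*k+8) * ((4*k+8 : ℕ):ℝ)^3 / ((4*k+8).factorial : ℝ) := by
    have h := mono_gen (4*k+5) 3 hL.le (le_max_right 1 L) (le_max_left 1 L)
    rw [show 4*k+5+3 = 4*k+8 by omega] at h
    exact h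
  have m2 : L^(4*k+8)/((4*k+8).factorial : ℝ) ≤
      (max 1 L)^(4*k+8) * ((4*k+8 : ℕ):ℝ)^3 / ((4*k+8).factorial : ℝ) := by
    have h := mono_gen (4*k+8) 0 hL.le (le_max_right 1 L) (le_max_left 1 L)
    rw [show 4*k+8+0 = 4*k+8 by omega] at h
    rw [pow_zero, mul_one] at h
    refine h.trans ?_
    gcongr
    calc (max 1 L)^(4*k+8) = (max 1 L)^(4*k+8) * 1 := by ring
      _ ≤ (max 1 L)^(4*k+8) * ((4*k+8 : ℕ):ℝ)^3 := by
          have : (1:ℝ) ≤ ((4*k+8 : ℕ):ℝ)^3 := one_le_pow₀ hX1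
          nlinarith [pow_nonneg (le_trans zero_le_one (le_max_left 1 L)) (4*k+8)]
  have hpos : (0:ℝ) ≤ (Mρ + J)/cE * (Mρ/cE)^(k+1) := mul_nonneg hCb (pow_nonneg hRq _)
  calc (Mρ + J)/cE * (Mρ/cE)^(k+1) *
        (L^(4*k+5)/((4*k+5).factorial : ℝ) + L^(4*k+8)/((4*k+8).factorial : ℝ))
      ≤ (Mρ + J)/cE * (Mρ/cE)^(k+1) *
        ((max 1 L)^(4*k+8) * ((4*k+8 : ℕ):ℝ)^3 / ((4*k+8).factorial : ℝ)
          + (max 1 L)^(4*k+8) * ((4*k+8 : ℕ):ℝ)^3 / ((4*k+8).factorial : ℝ)) :=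
        mul_le_mul_of_nonneg_left (add_le_add m1 m2) hpos
    _ = 2 * ((Mρ + J)/cE) * (Mρ/cE)^(k+1) * (max 1 L)^(4*(k+2)) * ((4*k+8 : ℕ):ℝ)^3
          / ((4*k+8).factorial : ℝ) := by
        rw [show 4*(k+2) = 4*k+8 by omega]; ring
end DerivAll

section Final

lemma rpow_fact_div (l : ℕ) (s : ℝ) :
    (((2*l).factorial : ℝ))^s / ((4*l).factorial : ℝ) ≤ (((2*l).factorial : ℝ))^(s-2) := by
  have hF : (0:ℝ) < ((2*l).factorial : ℝ) := by positivity
  have h2 : ((2*l).factorial : ℝ) * ((2*l).factorial : ℝ) ≤ ((4*l).factorial : ℝ) := by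
    exact_mod_cast sq_fact_le l
  have e : (((2*l).factorial : ℝ))^(s-2)
      = (((2*l).factorial : ℝ))^s / (((2*l).factorial : ℝ) * ((2*l).factorial : ℝ)) := by
    rw [Real.rpow_sub hF]
    congr 1
    rw [show (2:ℝ) = ((2:ℕ):ℝ) by norm_num, Real.rpow_natCast]
    ring
  rw [e]
  exact div_le_div_of_nonneg_left (Real.rpow_nonneg hF.le s) (by positivity) h2

lemma pair_bound {Kg Kh K D s : ℝ} (hKg1 : 1 ≤ Kg) (hKh1 : 1 ≤ Kh) (hKgK : Kg ≤ K)
    (hKhK : Kh ≤ K) (hD : 0 < D) {j k l : ℕ} (hjk : j + k = l) :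
    (Kg^(j+1) * ((4*j+4 : ℕ):ℝ)^4 / ((4*j).factorial : ℝ)) *
      (Kh^(k+1) * ((4*k+4 : ℕ):ℝ)^4 / ((4*k).factorial : ℝ)) *
      (D^(2*l+1) * (((2*l).factorial : ℝ))^s)
    ≤ K^(l+2) * ((4*l+4 : ℕ):ℝ)^8 * 16^l *
        (D^(2*l+1) * (((2*l).factorial : ℝ))^(s-2)) := by
  have hK1 : 1 ≤ K := hKg1.trans hKgK
  have hKg0 : (0:ℝ) ≤ Kg := by linarith
  have hKh0 : (0:ℝ) ≤ Kh := by linarith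
  have hK0 : (0:ℝ) ≤ K := by linarith
  have P1 : Kg^(j+1) * Kh^(k+1) ≤ K^(l+2) := by
    calc Kg^(j+1) * Kh^(k+1) ≤ K^(j+1) * K^(k+1) :=
          mul_le_mul (pow_le_pow_left₀ hKg0 hKgK _) (pow_le_pow_left₀ hKh0 hKhK _)
            (pow_nonneg hKh0 _) (pow_nonneg hK0 _)
      _ = K^(l+2) := by rw [← pow_add]; congr 1; omega
  have P2 : ((4*j+4 : ℕ):ℝ)^4 * ((4*k+4 : ℕ):ℝ)^4 ≤ ((4*l+4 : ℕ):ℝ)^8 := by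
    have hj : ((4*j+4 : ℕ):ℝ) ≤ ((4*l+4 : ℕ):ℝ) := by
      exact_mod_cast (by omega : 4*j+4 ≤ 4*l+4)
    have hk : ((4*k+4 : ℕ):ℝ) ≤ ((4*l+4 : ℕ):ℝ) := by
      exact_mod_cast (by omega : 4*k+4 ≤ 4*l+4)
    calc ((4*j+4 : ℕ):ℝ)^4 * ((4*k+4 : ℕ):ℝ)^4 ≤ ((4*l+4 : ℕ):ℝ)^4 * ((4*l+4 : ℕ):ℝ)^4 :=
          mul_le_mul (pow_le_pow_left₀ (by positivity) hj _)
            (pow_le_pow_left₀ (by positivity) hk _) (by positivity) (by positivity)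
      _ = ((4*l+4 : ℕ):ℝ)^8 := by rw [← pow_add]
  have P3 : ((4*l).factorial : ℝ) ≤ 16^l * (((4*j).factorial : ℝ) * ((4*k).factorial : ℝ)) := by
    have h := fact_add_le_two_pow (4*j) (4*k)
    rw [show 4*j+4*k = 4*l by omega] at h
    have h' : ((4*l).factorial : ℝ) ≤ (2:ℝ)^(4*l) * (((4*j).factorial : ℝ) * ((4*k).factorial : ℝ)) := by
      exact_mod_cast h
    refine h'.trans (le_of_eq ?_)
    rw [pow_mul]
    norm_num
  have P4 : (((2*l).factorial : ℝ))^s / (((4*j).factorial : ℝ) * ((4*k).factorial : ℝ))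
      ≤ 16^l * (((2*l).factorial : ℝ))^(s-2) := by
    have hFs : (0:ℝ) ≤ (((2*l).factorial : ℝ))^s := Real.rpow_nonneg (by positivity) s
    calc (((2*l).factorial : ℝ))^s / (((4*j).factorial : ℝ) * ((4*k).factorial : ℝ))
        ≤ 16^l * ((((2*l).factorial : ℝ))^s / ((4*l).factorial : ℝ)) := by
          rw [div_le_iff₀ (by positivity), mul_comm (16^l : ℝ) _, mul_assoc, div_mul_eq_mul_div,
            le_div_iff₀ (by positivity)]
          refine (mul_le_mul_of_nonneg_left P3 hFs).trans (le_of_eq (by ring))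
      _ ≤ 16^l * (((2*l).factorial : ℝ))^(s-2) :=
          mul_le_mul_of_nonneg_left (rpow_fact_div l s) (by positivity)
  have eL : (Kg^(j+1) * ((4*j+4 : ℕ):ℝ)^4 / ((4*j).factorial : ℝ)) *
      (Kh^(k+1) * ((4*k+4 : ℕ):ℝ)^4 / ((4*k).factorial : ℝ)) *
      (D^(2*l+1) * (((2*l).factorial : ℝ))^s)
      = (Kg^(j+1) * Kh^(k+1)) * (((4*j+4 : ℕ):ℝ)^4 * ((4*k+4 : ℕ):ℝ)^4) * D^(2*l+1) *
        ((((2*l).factorial : ℝ))^s / (((4*j).factorial : ℝ) * ((4*k).factorial : ℝ))) := by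
    ring
  have eR : K^(l+2) * ((4*l+4 : ℕ):ℝ)^8 * 16^l * (D^(2*l+1) * (((2*l).factorial : ℝ))^(s-2))
      = K^(l+2) * ((4*l+4 : ℕ):ℝ)^8 * D^(2*l+1) * (16^l * (((2*l).factorial : ℝ))^(s-2)) := by
    ring
  rw [eL, eR]
  have hq1 : (0:ℝ) ≤ Kg^(j+1) * Kh^(k+1) := mul_nonneg (pow_nonneg hKg0 _) (pow_nonneg hKh0 _)
  have hq2 : (0:ℝ) ≤ ((4*j+4 : ℕ):ℝ)^4 * ((4*k+4 : ℕ):ℝ)^4 := by positivity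
  have hq4 : (0:ℝ) ≤ (((2*l).factorial : ℝ))^s / (((4*j).factorial : ℝ) * ((4*k).factorial : ℝ)) :=
    div_nonneg (Real.rpow_nonneg (by positivity) s) (by positivity)
  refine mul_le_mul (mul_le_mul (mul_le_mul P1 P2 hq2 (pow_nonneg hK0 _)) le_rfl
    (by positivity) ?_) P4 hq4 ?_
  · exact mul_nonneg (mul_nonneg (pow_nonneg hK0 _) (by positivity)) (by positivity)
  · exact mul_nonneg (mul_nonneg (mul_nonneg (pow_nonneg hK0 _) (by positivity)) (by positivity))
      (by positivity)

end Final

section Summ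
open Filter

lemma summable_majorant {K D s : ℝ} (hK1 : 1 ≤ K) (hD : 0 < D) (hs₂ : s < 2) :
    Summable (fun l : ℕ => ((l:ℝ)+1) * (K^(l+2) * ((4*l+4 : ℕ):ℝ)^8 * 16^l *
      (D^(2*l+1) * (((2*l).factorial : ℝ))^(s-2)))) := by
  have hK0 : (0:ℝ) < K := by linarith
  set u : ℕ → ℝ := fun l => ((l:ℝ)+1) * (K^(l+2) * ((4*l+4 : ℕ):ℝ)^8 * 16^l *
      (D^(2*l+1) * (((2*l).factorial : ℝ))^(s-2))) with hudef
  have hupos : ∀ l, 0 < u l := by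
    intro l
    have h1 : (0:ℝ) < ((4*l+4 : ℕ):ℝ) := by
      have : (0:ℕ) < 4*l+4 := by omega
      exact_mod_cast this
    exact mul_pos (by positivity)
      (mul_pos (mul_pos (mul_pos (pow_pos hK0 _) (pow_pos h1 _)) (by positivity))
        (mul_pos (pow_pos hD _) (Real.rpow_pos_of_pos (by positivity) _)))
  set Cst := 2 * (2:ℝ)^8 * 16 * K * D^2 with hCst
  have hCst0 : (0:ℝ) < Cst := by
    rw [hCst]
    exact mul_pos (mul_pos (mul_pos (mul_pos two_pos (by norm_num)) (by norm_num)) hK0)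
      (pow_pos hD 2)
  have stepA : ∀ l : ℕ, u (l+1) ≤ (Cst * ((((2*l+1)*(2*l+2) : ℕ)):ℝ)^(s-2)) * u l := by
    intro l
    set X := ((((2*l+1)*(2*l+2) : ℕ)):ℝ) with hX
    have hX0 : (0:ℝ) < X := by
      rw [hX]
      have : (0:ℕ) < (2*l+1)*(2*l+2) := by positivity
      exact_mod_cast this
    have eF : (((2*(l+1)).factorial : ℕ):ℝ) = X * ((2*l).factorial : ℝ) := by
      rw [hX]
      have e2 : (2*(l+1)).factorial = ((2*l+1)*(2*l+2)) * (2*l).factorial := by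
        rw [show 2*(l+1) = (2*l+1)+1 by omega, Nat.factorial_succ,
          show (2*l+1) = (2*l)+1 from rfl, Nat.factorial_succ]
        ring
      rw [e2]
      push_cast
      ring
    have eFr : (((2*(l+1)).factorial : ℕ):ℝ)^(s-2) = X^(s-2) * (((2*l).factorial : ℝ))^(s-2) := by
      rw [eF, Real.mul_rpow hX0.le (by positivity)]
    have e : u (l+1) = (((l:ℝ)+2) * (((4*l+8 : ℕ):ℝ))^8) *
        (K^(l+3) * 16^(l+1) * (D^(2*l+3) * (X^(s-2) * (((2*l).factorial : ℝ))^(s-2)))) := by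
      show ((((l+1):ℕ):ℝ)+1) * (K^((l+1)+2) * ((4*(l+1)+4 : ℕ):ℝ)^8 * 16^(l+1) *
        (D^(2*(l+1)+1) * (((2*(l+1)).factorial : ℕ):ℝ)^(s-2))) = _
      rw [show 4*(l+1)+4 = 4*l+8 by omega, show 2*(l+1)+1 = 2*l+3 by omega, eFr]
      push_cast
      ring
    have hQ : (0:ℝ) ≤ K^(l+3) * 16^(l+1) *
        (D^(2*l+3) * (X^(s-2) * (((2*l).factorial : ℝ))^(s-2))) := by
      refine mul_nonneg (mul_nonneg (pow_nonneg hK0.le _) (by positivity))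
        (mul_nonneg (pow_nonneg hD.le _) (mul_nonneg (Real.rpow_nonneg hX0.le _)
          (Real.rpow_nonneg (by positivity) _)))
    have hl0 : (0:ℝ) ≤ (l:ℝ) := Nat.cast_nonneg l
    have hP : ((l:ℝ)+2) * (((4*l+8 : ℕ):ℝ))^8 ≤ (2*((l:ℝ)+1)) * ((2*((4*l+4 : ℕ):ℝ))^8) := by
      have hc : ((4*l+8 : ℕ):ℝ) ≤ 2*((4*l+4 : ℕ):ℝ) := by push_cast; linarith
      exact mul_le_mul (by linarith) (pow_le_pow_left₀ (by positivity) hc _)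
        (by positivity) (by linarith)
    have step1 : u (l+1) ≤ ((2*((l:ℝ)+1)) * ((2*((4*l+4 : ℕ):ℝ))^8)) *
        (K^(l+3) * 16^(l+1) * (D^(2*l+3) * (X^(s-2) * (((2*l).factorial : ℝ))^(s-2)))) := by
      rw [e]
      exact mul_le_mul_of_nonneg_right hP hQ
    refine step1.trans (le_of_eq ?_)
    show _ = (Cst * X^(s-2)) * (((l:ℝ)+1) * (K^(l+2) * ((4*l+4 : ℕ):ℝ)^8 * 16^l *
      (D^(2*l+1) * (((2*l).factorial : ℝ))^(s-2))))
    rw [hCst]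
    ring
  have h2s : (0:ℝ) < 2 - s := by linarith
  have htendN : Tendsto (fun l : ℕ => ((((2*l+1)*(2*l+2) : ℕ)):ℝ)) atTop atTop := by
    refine tendsto_natCast_atTop_atTop.comp ?_
    refine tendsto_atTop_mono (fun l => ?_) tendsto_id
    show (l : ℕ) ≤ (2*l+1)*(2*l+2)
    nlinarith
  have htend : Tendsto (fun l : ℕ => ((((2*l+1)*(2*l+2) : ℕ)):ℝ)^(2-s)) atTop atTop :=
    (tendsto_rpow_atTop h2s).comp htendN
  have hev : ∀ᶠ l in atTop, (2*Cst) ≤ ((((2*l+1)*(2*l+2) : ℕ)):ℝ)^(2-s) :=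
    htend.eventually_ge_atTop _
  refine summable_of_ratio_norm_eventually_le (r := 1/2) (by norm_num) ?_
  filter_upwards [hev] with l hl
  have hX0 : (0:ℝ) < ((((2*l+1)*(2*l+2) : ℕ)):ℝ) := by
    have : (0:ℕ) < (2*l+1)*(2*l+2) := by positivity
    exact_mod_cast this
  have hY0 : (0:ℝ) < ((((2*l+1)*(2*l+2) : ℕ)):ℝ)^(2-s) := lt_of_lt_of_le (by linarith) hl
  have hsmall : Cst * ((((2*l+1)*(2*l+2) : ℕ)):ℝ)^(s-2) ≤ 1/2 := by
    rw [show s-2 = -(2-s) by ring, Real.rpow_neg hX0.le, ← div_eq_mul_inv,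
      div_le_iff₀ hY0]
    linarith
  rw [Real.norm_eq_abs, Real.norm_eq_abs, abs_of_pos (hupos _), abs_of_pos (hupos _)]
  calc u (l+1) ≤ (Cst * ((((2*l+1)*(2*l+2) : ℕ)):ℝ)^(s-2)) * u l := stepA l
    _ ≤ (1/2) * u l := mul_le_mul_of_nonneg_right hsmall (hupos l).le

end Summ

/-- for `p ∈ G_s[0,T]` and every `t ∈ [0,T]`, the double sum
`Σ_{l≥0} Σ_{j+k=l} |g_j'(L) h_k'(L) p⁽²ˡ⁾(t)|` is finite (the outer series of the finite
inner sums over the antidiagonal is summable). -/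
theorem stmt12 (L m J : ℝ) (hL : 0 < L) (hm : 0 < m) (hJ : 0 < J)
    (ρ EI : ℝ → ℝ)
    (hρ : ContDiffOn ℝ 4 ρ (Set.Icc 0 L)) (hEI : ContDiffOn ℝ 4 EI (Set.Icc 0 L))
    (hρpos : ∃ c > 0, ∀ x ∈ Set.Icc (0:ℝ) L, c ≤ ρ x)
    (hEIpos : ∃ c > 0, ∀ x ∈ Set.Icc (0:ℝ) L, c ≤ EI x)
    (T s : ℝ) (hT : 0 < T) (hs₁ : 1 < s) (hs₂ : s < 2)
    (p : ℝ → ℝ) (hp : MemGevrey s T p) :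
    ∀ t ∈ Set.Icc (0:ℝ) T,
      Summable (fun l : ℕ =>
        ∑ jk ∈ Finset.HasAntidiagonal.antidiagonal l,
          |derivWithin (genG ρ EI m jk.1) (Set.Icc 0 L) L *
            derivWithin (genH ρ EI J jk.2) (Set.Icc 0 L) L *
            iteratedDeriv (2 * l) p t|) := by
  intro t ht
  obtain ⟨hpc, D, hD, hpD⟩ := hp
  obtain ⟨cE, hcE, hEIlb⟩ := hEIpos
  have hEIc : ContinuousOn EI (Set.Icc 0 L) := hEI.continuousOn
  have hρc : ContinuousOn ρ (Set.Icc 0 L) := hρ.continuousOn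
  obtain ⟨Mρ, hMρ'⟩ := IsCompact.exists_bound_of_continuousOn isCompact_Icc hρc
  have hMρ : ∀ x ∈ Set.Icc (0:ℝ) L, |ρ x| ≤ Mρ := by
    intro x hx
    simpa [Real.norm_eq_abs] using hMρ' x hx
  have hMρ0 : 0 ≤ Mρ := le_trans (abs_nonneg _) (hMρ 0 ⟨le_rfl, hL.le⟩)
  obtain ⟨Kg, hKg1, hKg⟩ := genG_deriv_all hL hEIc hcE hEIlb hρc hMρ hMρ0 hm.le
  obtain ⟨Kh, hKh1, hKh⟩ := genH_deriv_all hL hEIc hcE hEIlb hρc hMρ hMρ0 hJ.le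
  set K := max Kg Kh with hK
  have hK1 : (1:ℝ) ≤ K := hKg1.trans (le_max_left _ _)
  have hKg0 : (0:ℝ) ≤ Kg := by linarith
  have hKh0 : (0:ℝ) ≤ Kh := by linarith
  have hu := summable_majorant (K := K) (D := D) hK1 hD hs₂
  refine Summable.of_nonneg_of_le
    (fun l => Finset.sum_nonneg fun _ _ => abs_nonneg _) (fun l => ?_) hu
  have hterm : ∀ jk ∈ Finset.HasAntidiagonal.antidiagonal l,
      |derivWithin (genG ρ EI m jk.1) (Set.Icc 0 L) L *
        derivWithin (genH ρ EI J jk.2) (Set.Icc 0 L) L *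
        iteratedDeriv (2 * l) p t| ≤
      K^(l+2) * ((4*l+4 : ℕ):ℝ)^8 * 16^l *
        (D^(2*l+1) * (((2*l).factorial : ℝ))^(s-2)) := by
    intro jk hjk
    have hjkl : jk.1 + jk.2 = l := Finset.HasAntidiagonal.mem_antidiagonal.mp hjk
    have h1 := hKg jk.1
    have h2 := hKh jk.2
    have h3 := hpD (2*l) t ht
    have hA0 : (0:ℝ) ≤ Kg^(jk.1+1) * ((4*jk.1+4 : ℕ):ℝ)^4 / ((4*jk.1).factorial : ℝ) :=
      div_nonneg (mul_nonneg (pow_nonneg hKg0 _) (by positivity)) (by positivity)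
    have hB0 : (0:ℝ) ≤ Kh^(jk.2+1) * ((4*jk.2+4 : ℕ):ℝ)^4 / ((4*jk.2).factorial : ℝ) :=
      div_nonneg (mul_nonneg (pow_nonneg hKh0 _) (by positivity)) (by positivity)
    have habs : |derivWithin (genG ρ EI m jk.1) (Set.Icc 0 L) L *
        derivWithin (genH ρ EI J jk.2) (Set.Icc 0 L) L *
        iteratedDeriv (2 * l) p t|
        = |derivWithin (genG ρ EI m jk.1) (Set.Icc 0 L) L| *
          |derivWithin (genH ρ EI J jk.2) (Set.Icc 0 L) L| *
          |iteratedDeriv (2 * l) p t| := by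
      rw [abs_mul, abs_mul]
    rw [habs]
    have tmul : |derivWithin (genG ρ EI m jk.1) (Set.Icc 0 L) L| *
          |derivWithin (genH ρ EI J jk.2) (Set.Icc 0 L) L| *
          |iteratedDeriv (2 * l) p t| ≤
        (Kg^(jk.1+1) * ((4*jk.1+4 : ℕ):ℝ)^4 / ((4*jk.1).factorial : ℝ)) *
          (Kh^(jk.2+1) * ((4*jk.2+4 : ℕ):ℝ)^4 / ((4*jk.2).factorial : ℝ)) *
          (D^(2*l+1) * (((2*l).factorial : ℝ))^s) :=
      mul_le_mul (mul_le_mul h1 h2 (abs_nonneg _) hA0) h3 (abs_nonneg _)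
        (mul_nonneg hA0 hB0)
    exact tmul.trans (pair_bound hKg1 hKh1 (le_max_left _ _) (le_max_right _ _) hD hjkl)
  calc (∑ jk ∈ Finset.HasAntidiagonal.antidiagonal l,
        |derivWithin (genG ρ EI m jk.1) (Set.Icc 0 L) L *
          derivWithin (genH ρ EI J jk.2) (Set.Icc 0 L) L *
          iteratedDeriv (2 * l) p t|)
      ≤ (Finset.HasAntidiagonal.antidiagonal l).card •
        (K^(l+2) * ((4*l+4 : ℕ):ℝ)^8 * 16^l *
          (D^(2*l+1) * (((2*l).factorial : ℝ))^(s-2))) :=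
        Finset.sum_le_card_nsmul _ _ _ hterm
    _ = ((l:ℝ)+1) * (K^(l+2) * ((4*l+4 : ℕ):ℝ)^8 * 16^l *
          (D^(2*l+1) * (((2*l).factorial : ℝ))^(s-2))) := by
        rw [Finset.Nat.card_antidiagonal, nsmul_eq_mul]
        push_cast
        ring
end
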